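/- arXiv:2411.12881 — 5 statements merged into one kernel-verified Lean document; each statement's English description precedes it below -/
import Mathlib

section
/- Let γ:[0,1]→ℝⁿ be a piecewise smooth path and set L = ∫₀¹ Σ_{i=1}^n |γ'_i(t)| dt. Then for every real ξ>0 the series Σ_{p=1}^∞ ξ^p Σ_{i₁,…,i_p∈{1,…,n}} |∫_γ dx_{i₁}⋯dx_{i_p}| converges, and its sum is at most e^{ξL} − 1. (Hence the Chen signature of γ has finite ξ-norm for every ξ>0, i.e., it lies in Neretin's Banach space T_n^ξ for every ξ>0.) -/
open Set MeasureTheory intervalIntegral Topology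
open scoped Manifold

noncomputable section

namespace ChenPaper

/-- A strictly increasing partition `0 = s 0 < s 1 < ⋯ < s k = 1` of `[0,1]`. -/
def IsPartition {k : ℕ} (s : Fin (k + 1) → ℝ) : Prop :=
  s 0 = 0 ∧ s (Fin.last k) = 1 ∧ StrictMono s

variable {E : Type*} [NormedAddCommGroup E] [NormedSpace ℝ E]

/-- A path `γ : [0,1] → E` is piecewise smooth if there is a partition of `[0,1]`
on whose closed subintervals `γ` is `C^∞`. -/
def PiecewiseSmooth (γ : ℝ → E) : Prop :=
  ∃ (k : ℕ) (s : Fin (k + 1) → ℝ), IsPartition s ∧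
    ∀ j : Fin k, ContDiffOn ℝ (⊤ : ℕ∞) γ (Icc (s j.castSucc) (s j.succ))

/-- A path is piecewise smoothly immersed if it is constant, or piecewise `C^∞`
with nowhere-vanishing (one-sided) derivative on each piece. -/
def PiecewiseSmoothImmersed (γ : ℝ → E) : Prop :=
  (∀ t ∈ Icc (0:ℝ) 1, γ t = γ 0) ∨
  ∃ (k : ℕ) (s : Fin (k + 1) → ℝ), IsPartition s ∧
    ∀ j : Fin k, ContDiffOn ℝ (⊤ : ℕ∞) γ (Icc (s j.castSucc) (s j.succ)) ∧
      ∀ t ∈ Icc (s j.castSucc) (s j.succ),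
        derivWithin γ (Icc (s j.castSucc) (s j.succ)) t ≠ 0

/-- Concatenation of paths. -/
def pconcat {X : Type*} (a b : ℝ → X) : ℝ → X :=
  fun t => if t ≤ 1 / 2 then a (2 * t) else b (2 * t - 1)

/-- Reversal of a path. -/
def pinv {X : Type*} (a : ℝ → X) : ℝ → X := fun t => a (1 - t)

/-- Orientation-preserving piecewise smooth reparametrization. -/
def Reparam {X : Type*} (α β : ℝ → X) : Prop :=
  ∃ σ : ℝ → ℝ, PiecewiseSmooth σ ∧ σ 0 = 0 ∧ σ 1 = 1 ∧
    StrictMonoOn σ (Icc 0 1) ∧ MapsTo σ (Icc 0 1) (Icc 0 1) ∧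
    (∃ τ : ℝ → ℝ, PiecewiseSmooth τ ∧ ∀ t ∈ Icc (0:ℝ) 1, τ (σ t) = t) ∧
    ∀ t ∈ Icc (0:ℝ) 1, β t = α (σ t)

/-- One step of the retrace relation, relative to a class `C` of paths:
either a reparametrization, or cancelling a retracing `a · a⁻¹` inserted
between `α` and `β`. -/
def RetraceBase {X : Type*} (C : (ℝ → X) → Prop) (γ₁ γ₂ : ℝ → X) : Prop :=
  Reparam γ₁ γ₂ ∨
  ∃ α β a : ℝ → X, C α ∧ C β ∧ C a ∧ a 0 = α 1 ∧ β 0 = α 1 ∧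
    (∀ t ∈ Icc (0:ℝ) 1, γ₁ t = pconcat α (pconcat (pconcat a (pinv a)) β) t) ∧
    (∀ t ∈ Icc (0:ℝ) 1, γ₂ t = pconcat α β t)

/-- The retrace relation: the equivalence relation generated by `RetraceBase C`. -/
def RetraceEquiv {X : Type*} (C : (ℝ → X) → Prop) : (ℝ → X) → (ℝ → X) → Prop :=
  Relation.EqvGen (RetraceBase C)

/-- `η` is a thin homotopy (rel endpoints) from the loop `α` to the loop `β`, based at `p`. -/
def IsThinHomotopy {X : Type*} [TopologicalSpace X] (p : X) (α β : ℝ → X)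
    (η : ℝ × ℝ → X) : Prop :=
  ContinuousOn η (Icc 0 1 ×ˢ Icc 0 1) ∧
  (∀ t ∈ Icc (0:ℝ) 1, η (0, t) = α t) ∧
  (∀ t ∈ Icc (0:ℝ) 1, η (1, t) = β t) ∧
  (∀ s ∈ Icc (0:ℝ) 1, η (s, 0) = p ∧ η (s, 1) = p) ∧
  η '' (Icc 0 1 ×ˢ Icc 0 1) ⊆ α '' Icc 0 1 ∪ β '' Icc 0 1

/-- Thin equivalence within the class `C` of loops based at `p`: the equivalence
relation on `C` generated by existence of a thin homotopy. -/
def ThinEquiv {X : Type*} [TopologicalSpace X] (C : (ℝ → X) → Prop) (p : X) :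
    (ℝ → X) → (ℝ → X) → Prop :=
  Relation.EqvGen (fun α β => C α ∧ C β ∧ ∃ η, IsThinHomotopy p α β η)

variable {n : ℕ}

/-- The `i`-th coordinate derivative of a path in `ℝⁿ` (junk value where not differentiable;
for a piecewise smooth path this is the honest derivative off the partition points). -/
def pathDeriv (γ : ℝ → (Fin n → ℝ)) (i : Fin n) : ℝ → ℝ :=
  fun t => deriv (fun u => γ u i) t

/-- `chenS γ [i_p, …, i_1] t` is the iterated integral
`∫_{0 ≤ t₁ ≤ ⋯ ≤ t_p ≤ t} γ'_{i₁}(t₁) ⋯ γ'_{i_p}(t_p)`; note the reversed index list. -/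
def chenS (γ : ℝ → (Fin n → ℝ)) : List (Fin n) → ℝ → ℝ
  | [], _ => 1
  | i :: is, t => ∫ s in (0:ℝ)..t, chenS γ is s * pathDeriv γ i s

/-- `S_t(i₁,…,i_p)`: the elementary iterated integral over `{0 ≤ t₁ ≤ ⋯ ≤ t_p ≤ t}`,
with the index list in natural order `[i₁, …, i_p]`. -/
def sigPartial (γ : ℝ → (Fin n → ℝ)) (l : List (Fin n)) (t : ℝ) : ℝ :=
  chenS γ l.reverse t

/-- The elementary iterated integral `∫_γ dx_{i₁} ⋯ dx_{i_p}` for `l = [i₁, …, i_p]`. -/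
def elemIterInt (γ : ℝ → (Fin n → ℝ)) (l : List (Fin n)) : ℝ :=
  chenS γ l.reverse 1



section AuxSig


private lemma II_ae_of_eqOn {f g : ℝ → ℝ} {a b : ℝ} (hab : a ≤ b) (E : Set ℝ)
    (hE : volume E = 0) (h : ∀ x ∈ Ioc a b, x ∉ E → f x = g x) :
    ∀ᵐ x : ℝ, x ∈ Ioc a b → f x = g x := by
  rw [MeasureTheory.ae_iff]
  refine measure_mono_null (fun x hx => ?_) hE
  simp only [mem_setOf_eq, Classical.not_imp] at hx
  by_contra hxE
  exact hx.2 (h x hx.1 hxE)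

private lemma II_congr_null {f g : ℝ → ℝ} {a b : ℝ} (hab : a ≤ b) (E : Set ℝ)
    (hE : volume E = 0) (h : ∀ x ∈ Ioc a b, x ∉ E → f x = g x)
    (hf : IntervalIntegrable f volume a b) : IntervalIntegrable g volume a b := by
  rw [intervalIntegrable_iff_integrableOn_Ioc_of_le hab] at hf ⊢
  exact hf.congr ((ae_restrict_iff' measurableSet_Ioc).2 (II_ae_of_eqOn hab E hE h))

private lemma int_congr_null {f g : ℝ → ℝ} {a b : ℝ} (hab : a ≤ b) (E : Set ℝ)
    (hE : volume E = 0) (h : ∀ x ∈ Ioc a b, x ∉ E → f x = g x) :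
    ∫ x in a..b, f x = ∫ x in a..b, g x := by
  apply intervalIntegral.integral_congr_ae
  rw [Set.uIoc_of_le hab]
  exact II_ae_of_eqOn hab E hE h

variable {k : ℕ} {s : Fin (k + 1) → ℝ}

private lemma mem01 (hs : IsPartition s) (m : Fin (k + 1)) : s m ∈ Icc (0:ℝ) 1 :=
  ⟨hs.1 ▸ hs.2.2.monotone (Fin.zero_le m), hs.2.1 ▸ hs.2.2.monotone (Fin.le_last m)⟩

private lemma exists_piece (hs : IsPartition s) {x : ℝ} (h0 : 0 ≤ x) (h1 : x < 1) :
    ∃ j : Fin k, s j.castSucc ≤ x ∧ x < s j.succ := by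
  classical
  set T := Finset.univ.filter (fun m : Fin (k + 1) => s m ≤ x) with hT
  have hTne : T.Nonempty := ⟨0, by simp [hT, hs.1, h0]⟩
  set m := T.max' hTne with hm
  have hmx : s m ≤ x := (Finset.mem_filter.1 (T.max'_mem hTne)).2
  have hmlast : m ≠ Fin.last k := by
    rintro h
    rw [h, hs.2.1] at hmx
    linarith
  have hmk : (m : ℕ) < k :=
    lt_of_le_of_ne (Nat.lt_succ_iff.1 m.isLt) (fun h => hmlast (Fin.ext h))
  have hcast : (⟨(m : ℕ), hmk⟩ : Fin k).castSucc = m := by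
    apply Fin.ext; rfl
  refine ⟨⟨(m : ℕ), hmk⟩, by rw [hcast]; exact hmx, ?_⟩
  by_contra hlt
  push_neg at hlt
  have hmem : (⟨(m : ℕ), hmk⟩ : Fin k).succ ∈ T :=
    Finset.mem_filter.2 ⟨Finset.mem_univ _, hlt⟩
  have hle := T.le_max' _ hmem
  have hlt2 : m < (⟨(m : ℕ), hmk⟩ : Fin k).succ := by
    rw [Fin.lt_def]
    exact Nat.lt_succ_self _
  exact absurd hle (not_le.2 hlt2)

variable {γ : ℝ → (Fin n → ℝ)}

private def pieceD (γ : ℝ → (Fin n → ℝ)) (a b : ℝ) : ℝ → ℝ :=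
  fun x => ∑ i : Fin n, |derivWithin (fun u => γ u i) (Icc a b) x|

private def gTil (γ : ℝ → (Fin n → ℝ)) : ℝ → ℝ :=
  fun x => ∑ i : Fin n, |derivWithin (fun u => γ u i) (Ici x) x|

private def gFun (γ : ℝ → (Fin n → ℝ)) : ℝ → ℝ :=
  fun x => ∑ i : Fin n, |pathDeriv γ i x|

private def Gprim (γ : ℝ → (Fin n → ℝ)) : ℝ → ℝ :=
  fun u => ∫ t in (0:ℝ)..u, gFun γ t

private lemma gFun_nonneg (x : ℝ) : 0 ≤ gFun γ x :=
  Finset.sum_nonneg fun _ _ => abs_nonneg _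

section WithSmooth

variable (hs : IsPartition s)
variable (hsm : ∀ j : Fin k, ContDiffOn ℝ (⊤ : ℕ∞) γ (Icc (s j.castSucc) (s j.succ)))

include hs hsm

private lemma compSmooth (j : Fin k) (i : Fin n) :
    ContDiffOn ℝ (⊤ : ℕ∞) (fun u => γ u i) (Icc (s j.castSucc) (s j.succ)) :=
  (ContinuousLinearMap.proj (R := ℝ) (φ := fun _ : Fin n => ℝ) i).contDiff.comp_contDiffOn (hsm j)

private lemma pieceD_cont (j : Fin k) :
    ContinuousOn (pieceD γ (s j.castSucc) (s j.succ)) (Icc (s j.castSucc) (s j.succ)) := by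
  have hab : s j.castSucc < s j.succ := hs.2.2 (Fin.castSucc_lt_succ (i := j))
  exact continuousOn_finset_sum _ fun i _ =>
    ((compSmooth hs hsm j i).continuousOn_derivWithin (uniqueDiffOn_Icc hab) (by simp)).abs

private lemma pathDeriv_eq_interior (j : Fin k) {x : ℝ}
    (hx : x ∈ Ioo (s j.castSucc) (s j.succ)) (i : Fin n) :
    pathDeriv γ i x = derivWithin (fun u => γ u i) (Icc (s j.castSucc) (s j.succ)) x := by
  rw [pathDeriv]
  exact (derivWithin_of_mem_nhds (Icc_mem_nhds hx.1 hx.2)).symm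

private lemma gFun_eq_pieceD (j : Fin k) {x : ℝ}
    (hx : x ∈ Ioo (s j.castSucc) (s j.succ)) :
    gFun γ x = pieceD γ (s j.castSucc) (s j.succ) x :=
  Finset.sum_congr rfl fun i _ => by rw [pathDeriv_eq_interior hs hsm j hx i]

private lemma derivWithin_Ici_eq (j : Fin k) {x : ℝ}
    (hx1 : s j.castSucc ≤ x) (hx2 : x < s j.succ) (i : Fin n) :
    derivWithin (fun u => γ u i) (Ici x) x
      = derivWithin (fun u => γ u i) (Icc (s j.castSucc) (s j.succ)) x := by
  have h1 : derivWithin (fun u => γ u i) (Ici x ∩ Iio (s j.succ)) x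
      = derivWithin (fun u => γ u i) (Ici x) x := derivWithin_inter (Iio_mem_nhds hx2)
  rw [← h1, Set.Ici_inter_Iio]
  exact derivWithin_subset (fun y hy => ⟨hx1.trans hy.1, hy.2.le⟩)
    (uniqueDiffOn_Ico x (s j.succ) x ⟨le_refl x, hx2⟩)
    ((compSmooth hs hsm j i).differentiableOn (by simp) x ⟨hx1, hx2.le⟩)

private lemma gTil_eq_pieceD (j : Fin k) {x : ℝ}
    (hx1 : s j.castSucc ≤ x) (hx2 : x < s j.succ) :
    gTil γ x = pieceD γ (s j.castSucc) (s j.succ) x :=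
  Finset.sum_congr rfl fun i _ => by rw [derivWithin_Ici_eq hs hsm j hx1 hx2 i]

private lemma pd_int_piece (j : Fin k) (i : Fin n) :
    IntervalIntegrable (pathDeriv γ i) volume (s j.castSucc) (s j.succ) := by
  have hab : s j.castSucc < s j.succ := hs.2.2 (Fin.castSucc_lt_succ (i := j))
  have hc : ContinuousOn (fun x => derivWithin (fun u => γ u i)
      (Icc (s j.castSucc) (s j.succ)) x) (Icc (s j.castSucc) (s j.succ)) :=
    (compSmooth hs hsm j i).continuousOn_derivWithin (uniqueDiffOn_Icc hab) (by simp)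
  have hci : IntervalIntegrable (fun x => derivWithin (fun u => γ u i)
      (Icc (s j.castSucc) (s j.succ)) x) volume (s j.castSucc) (s j.succ) :=
    hc.intervalIntegrable_of_Icc hab.le
  refine II_congr_null hab.le {s j.succ} (measure_singleton _) (fun x hx hxE => ?_) hci
  have hxlt : x < s j.succ := lt_of_le_of_ne hx.2 (by simpa using hxE)
  exact (pathDeriv_eq_interior hs hsm j ⟨hx.1, hxlt⟩ i).symm

private lemma chain_II {f : ℝ → ℝ}
    (h : ∀ j : Fin k, IntervalIntegrable f volume (s j.castSucc) (s j.succ)) :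
    IntervalIntegrable f volume 0 1 := by
  have H : ∀ m : Fin (k + 1), IntervalIntegrable f volume (s 0) (s m) := by
    intro m
    induction m using Fin.induction with
    | zero => exact IntervalIntegrable.refl
    | succ j ih => exact ih.trans (h j)
  have := H (Fin.last k)
  rwa [hs.1, hs.2.1] at this

private lemma pd_int (i : Fin n) : IntervalIntegrable (pathDeriv γ i) volume 0 1 :=
  chain_II hs hsm fun j => pd_int_piece hs hsm j i

private lemma g_int : IntervalIntegrable (gFun γ) volume 0 1 := by
  have h := IntervalIntegrable.sum (μ := volume) (a := 0) (b := 1) Finset.univ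
    (f := fun (i : Fin n) x => |pathDeriv γ i x|) (fun i _ => (pd_int hs hsm i).abs)
  unfold gFun
  simpa [Finset.sum_fn] using h

private lemma G_cont : ContinuousOn (Gprim γ) (Icc (0:ℝ) 1) := by
  have hInt : IntegrableOn (gFun γ) (uIcc (0:ℝ) 1) volume := by
    rw [uIcc_of_le zero_le_one]
    exact (intervalIntegrable_iff_integrableOn_Icc_of_le zero_le_one).1 (g_int hs hsm)
  have := intervalIntegral.continuousOn_primitive_interval hInt
  rwa [uIcc_of_le zero_le_one] at this

private lemma G_hasDeriv {x : ℝ} (hx : x ∈ Ico (0:ℝ) 1) :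
    HasDerivWithinAt (Gprim γ) (gTil γ x) (Ici x) x := by
  obtain ⟨j, hax, hxb⟩ := exists_piece hs hx.1 hx.2
  set A := s j.castSucc with hA
  set B := s j.succ with hB
  set c := pieceD γ A B with hc
  have hA0 : 0 ≤ A := (mem01 hs _).1
  have hB1 : B ≤ 1 := (mem01 hs _).2
  have hccont : ContinuousOn c (Icc A B) := pieceD_cont hs hsm j
  have hsub : Ioo x B ⊆ Icc A B := fun y hy => ⟨hax.trans hy.1.le, hy.2.le⟩
  have hIooMem : Ioo x B ∈ 𝓝[>] x := Ioo_mem_nhdsGT_of_mem ⟨le_refl x, hxb⟩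
  have hcx : ContinuousWithinAt c (Ioi x) x :=
    (hccont.continuousWithinAt ⟨hax, hxb.le⟩).mono_of_mem_nhdsWithin
      (Filter.mem_of_superset hIooMem hsub)
  have hmeasc : StronglyMeasurableAtFilter c (𝓝[>] x) volume :=
    ⟨Ioo x B, hIooMem, ((hccont.mono hsub).aestronglyMeasurable measurableSet_Ioo)⟩
  have hPhi : HasDerivWithinAt (fun u => ∫ t in x..u, c t) (c x) (Ici x) x :=
    intervalIntegral.integral_hasDerivWithinAt_right IntervalIntegrable.refl hmeasc hcx
  have hgint := g_int hs hsm
  have key : ∀ u ∈ Ico x B, Gprim γ u = Gprim γ x + ∫ t in x..u, c t := by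
    intro u hu
    have hu1 : u ≤ 1 := (lt_of_lt_of_le hu.2 hB1).le
    have i1 : IntervalIntegrable (gFun γ) volume 0 x :=
      hgint.mono_set (by rw [uIcc_of_le hx.1, uIcc_of_le zero_le_one]
                         exact Icc_subset_Icc le_rfl hx.2.le)
    have i2 : IntervalIntegrable (gFun γ) volume x u :=
      hgint.mono_set (by rw [uIcc_of_le hu.1, uIcc_of_le zero_le_one]
                         exact Icc_subset_Icc hx.1 hu1)
    have hsplit := intervalIntegral.integral_add_adjacent_intervals i1 i2
    have hcongr : ∫ t in x..u, gFun γ t = ∫ t in x..u, c t := by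
      refine int_congr_null hu.1 ∅ measure_empty (fun t ht _ => ?_)
      exact gFun_eq_pieceD hs hsm j ⟨lt_of_le_of_lt hax ht.1, lt_of_le_of_lt ht.2 hu.2⟩
    have : Gprim γ u = Gprim γ x + ∫ t in x..u, gFun γ t := by
      rw [Gprim, Gprim]
      exact hsplit.symm
    rw [this, hcongr]
  have hV : Ico x B ∈ 𝓝[Ici x] x := by
    rw [← Set.Ici_inter_Iio]
    exact inter_mem_nhdsWithin _ (Iio_mem_nhds hxb)
  have hfinal :=
    (hPhi.const_add (Gprim γ x)).congr_of_eventuallyEq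
      (Filter.eventuallyEq_of_mem hV key) (by simp)
  rwa [show c x = gTil γ x from (gTil_eq_pieceD hs hsm j hax hxb).symm] at hfinal

private lemma G_pow_integral (p : ℕ) {t : ℝ} (ht : t ∈ Icc (0:ℝ) 1) :
    ∫ u in (0:ℝ)..t, Gprim γ u ^ p * gFun γ u
      = Gprim γ t ^ (p + 1) / ((p : ℝ) + 1) := by
  have hgint := g_int hs hsm
  have hsubI : uIcc (0:ℝ) t ⊆ uIcc (0:ℝ) 1 := by
    rw [uIcc_of_le ht.1, uIcc_of_le zero_le_one]
    exact Icc_subset_Icc le_rfl ht.2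
  have hGt : ContinuousOn (Gprim γ) (uIcc (0:ℝ) t) := by
    refine (G_cont hs hsm).mono ?_
    rw [uIcc_of_le ht.1]
    exact Icc_subset_Icc le_rfl ht.2
  have hint1 : IntervalIntegrable (fun u => Gprim γ u ^ p * gFun γ u) volume 0 t :=
    (hgint.mono_set hsubI).continuousOn_mul (hGt.pow p)
  have hrange : volume (Set.range s) = 0 := (Set.finite_range s).measure_zero _
  have hfg : ∀ x ∈ Ioc (0:ℝ) t, x ∉ Set.range s →
      Gprim γ x ^ p * gFun γ x = Gprim γ x ^ p * gTil γ x := by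
    intro x hx hxE
    have hx1 : x < 1 := by
      rcases lt_or_eq_of_le (hx.2.trans ht.2) with h | h
      · exact h
      · exact absurd ⟨Fin.last k, hs.2.1.trans h.symm⟩ hxE
    obtain ⟨j, hax, hxb⟩ := exists_piece hs hx.1.le hx1
    have hax' : s j.castSucc < x := lt_of_le_of_ne hax (fun h => hxE ⟨j.castSucc, h⟩)
    rw [gFun_eq_pieceD hs hsm j ⟨hax', hxb⟩, gTil_eq_pieceD hs hsm j hax hxb]
  have hint2 : IntervalIntegrable (fun u => Gprim γ u ^ p * gTil γ u) volume 0 t :=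
    II_congr_null ht.1 _ hrange hfg hint1
  rw [int_congr_null ht.1 _ hrange hfg]
  have hcont : ContinuousOn (fun u => Gprim γ u ^ (p + 1) / ((p : ℝ) + 1)) (Icc 0 t) := by
    have : ContinuousOn (Gprim γ) (Icc 0 t) := by
      rw [uIcc_of_le ht.1] at hGt; exact hGt
    exact (this.pow (p + 1)).div_const _
  have hderiv : ∀ x ∈ Ioo (0:ℝ) t,
      HasDerivWithinAt (fun u => Gprim γ u ^ (p + 1) / ((p : ℝ) + 1))
        (Gprim γ x ^ p * gTil γ x) (Ioi x) x := by
    intro x hx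
    have hx' : x ∈ Ico (0:ℝ) 1 := ⟨hx.1.le, lt_of_lt_of_le hx.2 ht.2⟩
    have hG := (G_hasDeriv hs hsm hx').mono Set.Ioi_subset_Ici_self
    have h2 := (hG.pow (p + 1)).div_const ((p : ℝ) + 1)
    have hne : ((p : ℝ) + 1) ≠ 0 := by positivity
    have : (↑(p + 1) * Gprim γ x ^ (p + 1 - 1) * gTil γ x) / ((p : ℝ) + 1)
        = Gprim γ x ^ p * gTil γ x := by
      push_cast
      field_simp
    rwa [this] at h2
  have heq := intervalIntegral.integral_eq_sub_of_hasDeriv_right_of_le ht.1 hcont hderiv hint2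
  rw [heq]
  have h0 : Gprim γ 0 = 0 := intervalIntegral.integral_same
  rw [h0]
  simp

private lemma chen_cont : ∀ l : List (Fin n), ContinuousOn (chenS γ l) (Icc (0:ℝ) 1)
  | [] => by simpa [chenS] using (continuousOn_const : ContinuousOn (fun _ : ℝ => (1:ℝ)) _)
  | (i :: l) => by
      have ih := chen_cont l
      have hint : IntervalIntegrable (fun u => chenS γ l u * pathDeriv γ i u) volume 0 1 :=
        (pd_int hs hsm i).continuousOn_mul (by rw [uIcc_of_le zero_le_one]; exact ih)
      have hI : IntegrableOn (fun u => chenS γ l u * pathDeriv γ i u) (uIcc (0:ℝ) 1) volume := by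
        rw [uIcc_of_le zero_le_one]
        exact (intervalIntegrable_iff_integrableOn_Icc_of_le zero_le_one).1 hint
      have h2 := intervalIntegral.continuousOn_primitive_interval hI
      rw [uIcc_of_le zero_le_one] at h2
      simpa [chenS] using h2

private lemma chen_int (l : List (Fin n)) (i : Fin n) {t : ℝ} (ht : t ∈ Icc (0:ℝ) 1) :
    IntervalIntegrable (fun u => chenS γ l u * pathDeriv γ i u) volume 0 t := by
  have hsubI : uIcc (0:ℝ) t ⊆ uIcc (0:ℝ) 1 := by
    rw [uIcc_of_le ht.1, uIcc_of_le zero_le_one]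
    exact Icc_subset_Icc le_rfl ht.2
  refine ((pd_int hs hsm i).mono_set hsubI).continuousOn_mul ?_
  refine (chen_cont hs hsm l).mono ?_
  rw [uIcc_of_le ht.1]
  exact Icc_subset_Icc le_rfl ht.2

private lemma main_bound : ∀ p : ℕ, ∀ t ∈ Icc (0:ℝ) 1,
    ∑ w : Fin p → Fin n, |chenS γ (List.ofFn w) t|
      ≤ Gprim γ t ^ p / (p.factorial : ℝ) := by
  intro p
  induction p with
  | zero =>
      intro t ht
      simp [chenS]
  | succ p ih =>
      intro t ht
      have hre : ∑ w : Fin (p + 1) → Fin n, |chenS γ (List.ofFn w) t|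
          = ∑ q : Fin n × (Fin p → Fin n),
              |∫ u in (0:ℝ)..t, chenS γ (List.ofFn q.2) u * pathDeriv γ q.1 u| := by
        rw [← (Fin.consEquiv (fun _ : Fin (p + 1) => Fin n)).sum_comp
          (fun w => |chenS γ (List.ofFn w) t|)]
        refine Finset.sum_congr rfl fun q _ => ?_
        have : List.ofFn ((Fin.consEquiv (fun _ : Fin (p + 1) => Fin n)) q)
            = q.1 :: List.ofFn q.2 := by
          rw [List.ofFn_succ]
          simp [Fin.consEquiv]
        rw [this]
        simp [chenS]
      rw [hre]
      have habs : ∀ q : Fin n × (Fin p → Fin n),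
          |∫ u in (0:ℝ)..t, chenS γ (List.ofFn q.2) u * pathDeriv γ q.1 u|
            ≤ ∫ u in (0:ℝ)..t, |chenS γ (List.ofFn q.2) u| * |pathDeriv γ q.1 u| := by
        intro q
        have := intervalIntegral.abs_integral_le_integral_abs (f :=
          fun u => chenS γ (List.ofFn q.2) u * pathDeriv γ q.1 u) (μ := volume) ht.1
        simpa [abs_mul] using this
      have hqint : ∀ q : Fin n × (Fin p → Fin n),
          IntervalIntegrable
            (fun u => |chenS γ (List.ofFn q.2) u| * |pathDeriv γ q.1 u|) volume 0 t := by
        intro q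
        have := (chen_int hs hsm (List.ofFn q.2) q.1 ht).abs
        simpa [abs_mul] using this
      calc ∑ q : Fin n × (Fin p → Fin n),
              |∫ u in (0:ℝ)..t, chenS γ (List.ofFn q.2) u * pathDeriv γ q.1 u|
          ≤ ∑ q : Fin n × (Fin p → Fin n),
              ∫ u in (0:ℝ)..t, |chenS γ (List.ofFn q.2) u| * |pathDeriv γ q.1 u| :=
            Finset.sum_le_sum fun q _ => habs q
        _ = ∫ u in (0:ℝ)..t, ∑ q : Fin n × (Fin p → Fin n),
              |chenS γ (List.ofFn q.2) u| * |pathDeriv γ q.1 u| :=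
            (intervalIntegral.integral_finset_sum fun q _ => hqint q).symm
        _ = ∫ u in (0:ℝ)..t,
              (∑ w : Fin p → Fin n, |chenS γ (List.ofFn w) u|) * gFun γ u := by
            refine intervalIntegral.integral_congr (fun u _ => ?_)
            rw [gFun, Finset.sum_mul_sum, Fintype.sum_prod_type, Finset.sum_comm]
        _ ≤ ∫ u in (0:ℝ)..t,
              (Gprim γ u ^ p / (p.factorial : ℝ)) * gFun γ u := by
            refine intervalIntegral.integral_mono_on ht.1 ?_ ?_ ?_
            · have heqf : (fun u => (∑ w : Fin p → Fin n, |chenS γ (List.ofFn w) u|) * gFun γ u)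
                  = fun u => ∑ q : Fin n × (Fin p → Fin n),
                      |chenS γ (List.ofFn q.2) u| * |pathDeriv γ q.1 u| := by
                funext u
                rw [gFun, Finset.sum_mul_sum, Fintype.sum_prod_type, Finset.sum_comm]
              rw [heqf]
              have h := IntervalIntegrable.sum (μ := volume) (a := 0) (b := t) Finset.univ
                (f := fun (q : Fin n × (Fin p → Fin n)) u =>
                  |chenS γ (List.ofFn q.2) u| * |pathDeriv γ q.1 u|)
                (fun q _ => hqint q)
              simpa [Finset.sum_fn] using h
            · have hsubI : uIcc (0:ℝ) t ⊆ uIcc (0:ℝ) 1 := by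
                rw [uIcc_of_le ht.1, uIcc_of_le zero_le_one]
                exact Icc_subset_Icc le_rfl ht.2
              refine ((g_int hs hsm).mono_set hsubI).continuousOn_mul ?_
              have hGt : ContinuousOn (Gprim γ) (uIcc (0:ℝ) t) := by
                refine (G_cont hs hsm).mono ?_
                rw [uIcc_of_le ht.1]
                exact Icc_subset_Icc le_rfl ht.2
              exact (hGt.pow p).div_const _
            · intro u hu
              exact mul_le_mul_of_nonneg_right (ih u ⟨hu.1, hu.2.trans ht.2⟩)
                (gFun_nonneg u)
        _ = Gprim γ t ^ (p + 1) / ((p + 1).factorial : ℝ) := by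
            have hptw : ∀ u : ℝ, (Gprim γ u ^ p / (p.factorial : ℝ)) * gFun γ u
                = (Gprim γ u ^ p * gFun γ u) / (p.factorial : ℝ) := fun u => by ring
            simp only [hptw]
            rw [intervalIntegral.integral_div, G_pow_integral hs hsm p ht,
              Nat.factorial_succ]
            rw [div_div, Nat.cast_mul, Nat.cast_add, Nat.cast_one]

end WithSmooth

private lemma sum_rev_eq (p : ℕ) (t : ℝ) :
    ∑ v : Fin p → Fin n, |chenS γ (List.ofFn v).reverse t|
      = ∑ w : Fin p → Fin n, |chenS γ (List.ofFn w) t| := by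
  have hbij : Function.Bijective (fun v : Fin p → Fin n => v ∘ Fin.rev) :=
    Function.Involutive.bijective (fun v => funext fun i => by
      simp [Function.comp, Fin.rev_rev])
  refine Fintype.sum_bijective _ hbij _ _ fun v => ?_
  have hl : (List.ofFn v).reverse = List.ofFn (v ∘ Fin.rev) := by
    apply List.ext_getElem
    · simp
    · intro i h1 h2
      simp only [List.getElem_reverse, List.getElem_ofFn, Function.comp_apply]
      congr 1
      simp only [List.length_ofFn, List.length_reverse] at h1 h2
      ext
      simp [Fin.rev]
      omega
  rw [hl]

end AuxSig

/-- For a piecewise smooth path `γ` with length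
`L = ∫₀¹ Σᵢ |γ'ᵢ(t)| dt` and every `ξ > 0`, the series
`Σ_{p ≥ 1} ξ^p Σ_{i₁,…,i_p} |∫_γ dx_{i₁}⋯dx_{i_p}|` converges, with sum at most
`e^{ξL} − 1`. -/
theorem signature_xi_norm_finite {n : ℕ} (γ : ℝ → (Fin n → ℝ))
    (hγ : PiecewiseSmooth γ) (ξ : ℝ) (hξ : 0 < ξ) :
    Summable (fun p : ℕ =>
      ξ ^ (p + 1) * ∑ v : Fin (p + 1) → Fin n, |elemIterInt γ (List.ofFn v)|) ∧
    ∑' p : ℕ, ξ ^ (p + 1) * ∑ v : Fin (p + 1) → Fin n, |elemIterInt γ (List.ofFn v)| ≤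
      Real.exp (ξ * ∫ t in (0:ℝ)..1, ∑ i : Fin n, |pathDeriv γ i t|) - 1 := by
  obtain ⟨k, s, hs, hsm⟩ := hγ
  set L : ℝ := ∫ t in (0:ℝ)..1, ∑ i : Fin n, |pathDeriv γ i t| with hL
  have hGL : Gprim γ 1 = L := rfl
  have h1mem : (1:ℝ) ∈ Icc (0:ℝ) 1 := ⟨zero_le_one, le_rfl⟩
  have hbound : ∀ p : ℕ,
      ξ ^ (p + 1) * ∑ v : Fin (p + 1) → Fin n, |elemIterInt γ (List.ofFn v)|
        ≤ (ξ * L) ^ (p + 1) / ((p + 1).factorial : ℝ) := by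
    intro p
    have h1 : ∑ v : Fin (p + 1) → Fin n, |elemIterInt γ (List.ofFn v)|
        = ∑ w : Fin (p + 1) → Fin n, |chenS γ (List.ofFn w) 1| := by
      rw [show (fun v : Fin (p+1) → Fin n => |elemIterInt γ (List.ofFn v)|)
        = fun v => |chenS γ (List.ofFn v).reverse 1| from rfl] at *
      exact sum_rev_eq (p + 1) 1
    have h2 := main_bound hs hsm (p + 1) 1 h1mem
    rw [← h1, hGL] at h2
    have h3 : ξ ^ (p + 1) * ∑ v : Fin (p + 1) → Fin n, |elemIterInt γ (List.ofFn v)|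
        ≤ ξ ^ (p + 1) * (L ^ (p + 1) / ((p + 1).factorial : ℝ)) :=
      mul_le_mul_of_nonneg_left h2 (pow_nonneg hξ.le _)
    calc ξ ^ (p + 1) * ∑ v : Fin (p + 1) → Fin n, |elemIterInt γ (List.ofFn v)|
        ≤ ξ ^ (p + 1) * (L ^ (p + 1) / ((p + 1).factorial : ℝ)) := h3
      _ = (ξ * L) ^ (p + 1) / ((p + 1).factorial : ℝ) := by
          rw [mul_pow]; ring
  have hnn : ∀ p : ℕ,
      0 ≤ ξ ^ (p + 1) * ∑ v : Fin (p + 1) → Fin n, |elemIterInt γ (List.ofFn v)| :=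
    fun p => mul_nonneg (pow_nonneg hξ.le _)
      (Finset.sum_nonneg fun _ _ => abs_nonneg _)
  have hsumExp : Summable (fun m : ℕ => (ξ * L) ^ m / (m.factorial : ℝ)) :=
    Real.summable_pow_div_factorial (ξ * L)
  have hsummajor : Summable (fun p : ℕ => (ξ * L) ^ (p + 1) / ((p + 1).factorial : ℝ)) :=
    (summable_nat_add_iff 1).2 hsumExp
  have hsum : Summable (fun p : ℕ =>
      ξ ^ (p + 1) * ∑ v : Fin (p + 1) → Fin n, |elemIterInt γ (List.ofFn v)|) :=
    Summable.of_nonneg_of_le hnn hbound hsummajor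
  refine ⟨hsum, ?_⟩
  have htsum := Summable.tsum_le_tsum hbound hsum hsummajor
  refine htsum.trans ?_
  have hexp : Real.exp (ξ * L) = ∑' m : ℕ, (ξ * L) ^ m / (m.factorial : ℝ) := by
    rw [Real.exp_eq_exp_ℝ, NormedSpace.exp_eq_tsum_div]
  have hsplit : ∑' m : ℕ, (ξ * L) ^ m / (m.factorial : ℝ)
      = 1 + ∑' p : ℕ, (ξ * L) ^ (p + 1) / ((p + 1).factorial : ℝ) := by
    rw [Summable.tsum_eq_zero_add hsumExp]
    simp
  rw [hexp, hsplit]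
  linarith [le_refl (∑' p : ℕ, (ξ * L) ^ (p + 1) / ((p + 1).factorial : ℝ))]

end ChenPaper
end
end

section
/- Let 𝔸 be a unital Banach algebra and B:[0,1]→𝔸 a continuous map. For n≥1 and t∈[0,1] let Iₙ(t) = ∫_{0≤t₁≤⋯≤tₙ≤t} B(t₁)B(t₂)⋯B(tₙ) dt₁⋯dtₙ. Then the series u(t) = 1 + Σ_{n=1}^∞ Iₙ(t) converges absolutely for every t∈[0,1], u(0)=1, and u is differentiable on [0,1] with u'(t) = u(t)·B(t) for all t∈[0,1] (one-sided derivatives at the endpoints). In other words, the iterated-integral (Chen/Dyson) series solves the parallel-transport equation whose holonomy gives the Chen signature. -/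
/-! Each `Iₙ₊₁` is a primitive of `Iₙ · B`, and `‖Iₙ(x)‖ ≤ ‖1‖ (C|x|)ⁿ / n!` whenever `‖B‖ ≤ C`
between `0` and `x`. The series of the `Iₙ` and of their derivatives are therefore dominated by
exponential series uniformly on bounded intervals, so the series may be differentiated term by
term, and the derivative `∑ₙ Iₙ · B` of `u - 1 = ∑ₙ Iₙ₊₁` is `u · B`. Extending `B` continuously
from `[0,1]` to `ℝ` first lets one work with two-sided derivatives on an open interval. -/

open Set MeasureTheory intervalIntegral

noncomputable section

namespace ChenPaper

variable {A : Type*} [NormedRing A] [NormedAlgebra ℝ A] [CompleteSpace A]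

/-- The iterated (Chen/Dyson) integral
`Iₙ(t) = ∫_{0 ≤ t₁ ≤ ⋯ ≤ tₙ ≤ t} B(t₁)⋯B(tₙ) dt₁⋯dtₙ`, defined recursively by
`I₀ = 1` and `Iₙ₊₁(t) = ∫₀ᵗ Iₙ(s)·B(s) ds`. -/
def iterI (B : ℝ → A) : ℕ → ℝ → A
  | 0, _ => 1
  | (m + 1), t => ∫ s in (0:ℝ)..t, iterI B m s * B s

end ChenPaper

namespace ChenPaper

variable {A : Type*} [NormedRing A] [NormedAlgebra ℝ A]

open scoped Nat Interval

lemma integral_abs_pow (m : ℕ) (x : ℝ) :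
    ∫ s in (0:ℝ)..x, |s| ^ m = x * |x| ^ m / (m + 1) := by
  rcases le_or_gt 0 x with hx | hx
  · rw [integral_congr (g := fun s => s ^ m) fun s hs => by
        rw [uIcc_of_le hx] at hs
        simp [abs_of_nonneg hs.1],
      integral_pow, abs_of_nonneg hx]
    ring
  · rw [integral_congr (g := fun s => (fun y : ℝ => y ^ m) (-s)) fun s hs => by
        rw [uIcc_of_ge hx.le] at hs
        simp [abs_of_nonpos hs.2],
      integral_comp_neg (fun y : ℝ => y ^ m), integral_pow, abs_of_nonpos hx.le]
    ring

variable {B : ℝ → A}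

lemma iterI_succ_apply_zero (m : ℕ) : iterI B (m + 1) 0 = 0 :=
  integral_same

lemma tsum_iterI_apply_zero : ∑' m, iterI B m 0 = 1 := by
  rw [tsum_eq_single 0 fun m hm => ?_]
  · rfl
  · obtain ⟨k, rfl⟩ := Nat.exists_eq_succ_of_ne_zero hm
    exact iterI_succ_apply_zero k

lemma iterI_eqOn {B' : ℝ → A} {T : ℝ} (h : EqOn B B' (Icc 0 T)) (m : ℕ) :
    EqOn (iterI B m) (iterI B' m) (Icc 0 T) := by
  induction m with
  | zero => exact fun _ _ => rfl
  | succ m ih =>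
    intro t ht
    refine integral_congr fun s hs => ?_
    rw [uIcc_of_le ht.1] at hs
    have hsT : s ∈ Icc 0 T := ⟨hs.1, hs.2.trans ht.2⟩
    simp only [ih hsT, h hsT]

lemma norm_iterI_le {C x : ℝ} (hC : ∀ s ∈ uIcc 0 x, ‖B s‖ ≤ C) (m : ℕ) :
    ‖iterI B m x‖ ≤ ‖(1 : A)‖ * ((C * |x|) ^ m / m !) := by
  have hC0 : 0 ≤ C := (norm_nonneg _).trans (hC 0 left_mem_uIcc)
  induction m generalizing x with
  | zero => simp [iterI]
  | succ m ih =>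
    have hterm : ∀ s ∈ Ι 0 x,
        ‖iterI B m s * B s‖ ≤ ‖(1 : A)‖ * (C ^ (m + 1) / m !) * |s| ^ m := fun s hs => by
      have hs : s ∈ uIcc 0 x := uIoc_subset_uIcc hs
      calc ‖iterI B m s * B s‖ ≤ ‖iterI B m s‖ * ‖B s‖ := norm_mul_le _ _
        _ ≤ ‖(1 : A)‖ * ((C * |s|) ^ m / m !) * C := by
            gcongr
            exacts [ih fun r hr => hC r (uIcc_subset_uIcc_left hs hr), hC s hs]
        _ = ‖(1 : A)‖ * (C ^ (m + 1) / m !) * |s| ^ m := by ring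
    have hint := norm_integral_le_abs_of_norm_le
      (ae_restrict_of_forall_mem measurableSet_uIoc hterm)
      ((continuous_abs.pow m).intervalIntegrable (μ := volume) 0 x |>.const_mul _)
    refine hint.trans_eq ?_
    rw [intervalIntegral.integral_const_mul, integral_abs_pow, abs_mul,
      abs_of_nonneg (by positivity : (0 : ℝ) ≤ ‖(1 : A)‖ * (C ^ (m + 1) / m !)), abs_div, abs_mul,
      abs_pow, abs_abs, ← pow_succ', abs_of_pos (by positivity : (0 : ℝ) < m + 1),
      Nat.factorial_succ, mul_pow]
    push_cast
    field_simp

lemma summable_norm_iterI {x : ℝ} (hB : ContinuousOn B (uIcc 0 x)) :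
    Summable fun m => ‖iterI B m x‖ := by
  obtain ⟨C, hC⟩ := isCompact_uIcc.exists_bound_of_continuousOn hB
  exact .of_nonneg_of_le (fun _ => norm_nonneg _) (norm_iterI_le hC)
    ((Real.summable_pow_div_factorial _).mul_left _)

lemma continuous_iterI (hB : Continuous B) (m : ℕ) : Continuous (iterI B m) := by
  induction m with
  | zero => exact continuous_const
  | succ m ih => exact continuous_primitive (fun _ _ => (ih.mul hB).intervalIntegrable _ _) 0

variable [CompleteSpace A]

lemma hasDerivAt_iterI_succ (hB : Continuous B) (m : ℕ) (t : ℝ) :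
    HasDerivAt (iterI B (m + 1)) (iterI B m t * B t) t :=
  (((continuous_iterI hB m).mul hB).integral_hasStrictDerivAt 0 t).hasDerivAt

theorem hasDerivAt_tsum_iterI (hB : Continuous B) (t : ℝ) :
    HasDerivAt (fun u => ∑' m, iterI B m u) ((∑' m, iterI B m t) * B t) t := by
  set R := |t| + 1
  have hR : 0 < R := by positivity
  obtain ⟨C, hC⟩ := isCompact_Icc.exists_bound_of_continuousOn (hB.continuousOn (s := Icc (-R) R))
  have hsub : ∀ y ∈ Ioo (-R) R, uIcc 0 y ⊆ Icc (-R) R := fun y hy =>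
    uIcc_subset_Icc ⟨neg_nonpos.2 hR.le, hR.le⟩ (Ioo_subset_Icc_self hy)
  have hsum : ∀ y, Summable fun m => iterI B m y := fun y =>
    (summable_norm_iterI hB.continuousOn).of_norm
  have hderiv : ∀ n, ∀ y ∈ Ioo (-R) R,
      ‖iterI B n y * B y‖ ≤ ‖(1 : A)‖ * ((C * R) ^ n / n !) * C := fun n y hy => by
    have hyR : |y| ≤ R := (abs_lt.2 hy).le
    have hC0 : 0 ≤ C := (norm_nonneg _).trans (hC y (Ioo_subset_Icc_self hy))
    calc ‖iterI B n y * B y‖ ≤ ‖iterI B n y‖ * ‖B y‖ := norm_mul_le _ _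
      _ ≤ ‖(1 : A)‖ * ((C * R) ^ n / n !) * C := by
          gcongr
          exacts [(norm_iterI_le (fun s hs => hC s (hsub y hy hs)) n).trans (by gcongr),
            hC y (Ioo_subset_Icc_self hy)]
  have htail : HasDerivAt (fun u => ∑' m, iterI B (m + 1) u) (∑' m, iterI B m t * B t) t :=
    hasDerivAt_tsum_of_isPreconnected
      (((Real.summable_pow_div_factorial _).mul_left _).mul_right _) isOpen_Ioo
      isPreconnected_Ioo (fun n y _ => hasDerivAt_iterI_succ hB n y) hderiv
      (y₀ := 0) ⟨neg_lt_zero.2 hR, hR⟩ (by simp [iterI_succ_apply_zero])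
      (abs_lt.1 (lt_add_one |t|))
  have hsplit : (fun u => ∑' m, iterI B m u) = fun u => 1 + ∑' m, iterI B (m + 1) u :=
    funext fun u => (hsum u).tsum_eq_zero_add
  rw [hsplit, ← (hsum t).tsum_mul_right]
  exact htail.const_add 1

/-- The Chen/Dyson series `u(t) = 1 + Σ_{n ≥ 1} Iₙ(t) = Σ_{n ≥ 0} Iₙ(t)`
converges absolutely on `[0,1]`, satisfies `u(0) = 1`, and solves the parallel-transport
equation `u'(t) = u(t)·B(t)` on `[0,1]` (one-sided derivatives at the endpoints). -/
theorem dyson_series_solves_transport (B : ℝ → A) (hB : ContinuousOn B (Icc 0 1)) :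
    (∀ t ∈ Icc (0:ℝ) 1, Summable fun m : ℕ => ‖iterI B m t‖) ∧
    (∑' m : ℕ, iterI B m 0) = 1 ∧
    ∀ t ∈ Icc (0:ℝ) 1,
      HasDerivWithinAt (fun u : ℝ => ∑' m : ℕ, iterI B m u)
        ((∑' m : ℕ, iterI B m t) * B t) (Icc 0 1) t := by
  refine ⟨fun t ht => summable_norm_iterI (hB.mono (uIcc_subset_Icc ⟨le_rfl, zero_le_one⟩ ht)),
    tsum_iterI_apply_zero, fun t ht => ?_⟩
  set B' : ℝ → A := IccExtend zero_le_one ((Icc (0:ℝ) 1).domRestrict B)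
  have hB' : Continuous B' := hB.domRestrict.Icc_extend'
  have hEq : EqOn B' B (Icc 0 1) := fun s hs => IccExtend_of_mem _ _ hs
  have hsum : EqOn (fun u => ∑' m, iterI B' m u) (fun u => ∑' m, iterI B m u) (Icc 0 1) :=
    fun u hu => tsum_congr fun m => iterI_eqOn hEq m hu
  have hval : (∑' m, iterI B' m t) * B' t = (∑' m, iterI B m t) * B t := by
    rw [hEq ht]
    exact congrArg (· * B t) (hsum ht)
  exact hval ▸ (hasDerivAt_tsum_iterI hB' t).hasDerivWithinAt.congr_of_mem
    (fun u hu => (hsum hu).symm) ht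

end ChenPaper
end
end

section
/- Let α,β:[0,1]→ℝⁿ be piecewise smooth paths with α(1)=β(0), and let α·β denote their concatenation. Then for every p≥1 and all indices i₁,…,i_p∈{1,…,n}: ∫_{α·β} dx_{i₁}⋯dx_{i_p} = Σ_{k=0}^{p} (∫_α dx_{i₁}⋯dx_{i_k})·(∫_β dx_{i_{k+1}}⋯dx_{i_p}), where the empty iterated integral (k=0 or k=p) is taken to be 1. In particular the Chen signature map is multiplicative under concatenation of paths. -/
open Set MeasureTheory intervalIntegral Topology
open scoped Manifold

noncomputable section

namespace ChenPaper

variable {E : Type*} [NormedAddCommGroup E] [NormedSpace ℝ E]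

variable {n : ℕ}

/-! ### Auxiliary lemmas for Chen's concatenation formula -/

section ConcatAux

lemma ae_ne_const (c : ℝ) : ∀ᵐ x : ℝ ∂volume, x ≠ c := by
  have h : volume ({c} : Set ℝ) = 0 := measure_singleton c
  rw [MeasureTheory.ae_iff]
  simpa using h

lemma deriv_comp_affine (f : ℝ → ℝ) (c d : ℝ) (hc : c ≠ 0) (x : ℝ) :
    deriv (fun u => f (c * u - d)) x = c * deriv f (c * x - d) := by
  by_cases h : DifferentiableAt ℝ f (c * x - d)
  · have hg : HasDerivAt (fun u : ℝ => c * u - d) c x := by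
      simpa using ((hasDerivAt_id x).const_mul c).sub_const d
    have h2 := (h.hasDerivAt.comp x hg).deriv
    rw [show deriv (fun u => f (c * u - d)) x = deriv (f ∘ fun u => c * u - d) x from rfl, h2]
    ring
  · have h2 : ¬ DifferentiableAt ℝ (fun u => f (c * u - d)) x := by
      intro hF
      apply h
      have hg : HasDerivAt (fun v : ℝ => (v + d) / c) (1 / c) (c * x - d) := by
        simpa using ((hasDerivAt_id (c * x - d)).add_const d).div_const c
      have hx : ((c * x - d) + d) / c = x := by field_simp; ring
      have h3 : DifferentiableAt ℝ ((fun u => f (c * u - d)) ∘ fun v => (v + d) / c)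
          (c * x - d) := by
        refine DifferentiableAt.comp _ ?_ hg.differentiableAt
        rw [hx]; exact hF
      have h4 : ((fun u => f (c * u - d)) ∘ fun v => (v + d) / c) = f := by
        funext v
        simp only [Function.comp]
        congr 1
        field_simp; ring
      rwa [h4] at h3
    rw [deriv_zero_of_not_differentiableAt h, deriv_zero_of_not_differentiableAt h2, mul_zero]

lemma pathDeriv_concat_lt (α β : ℝ → (Fin n → ℝ)) (i : Fin n) {s : ℝ} (hs : s < 1 / 2) :
    pathDeriv (pconcat α β) i s = 2 * pathDeriv α i (2 * s) := by
  have hev : (fun u => pconcat α β u i) =ᶠ[𝓝 s] (fun u => (fun v => α v i) (2 * u - 0)) := by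
    filter_upwards [Iio_mem_nhds hs] with u hu
    simp only [pconcat, sub_zero]
    rw [if_pos (le_of_lt (mem_Iio.mp hu))]
  unfold pathDeriv
  rw [hev.deriv_eq]
  have := deriv_comp_affine (fun v => α v i) 2 0 two_ne_zero s
  simpa using this

lemma pathDeriv_concat_gt (α β : ℝ → (Fin n → ℝ)) (i : Fin n) {s : ℝ} (hs : 1 / 2 < s) :
    pathDeriv (pconcat α β) i s = 2 * pathDeriv β i (2 * s - 1) := by
  have hev : (fun u => pconcat α β u i) =ᶠ[𝓝 s] (fun u => (fun v => β v i) (2 * u - 1)) := by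
    filter_upwards [Ioi_mem_nhds hs] with u hu
    simp only [pconcat]
    rw [if_neg (not_le.mpr (mem_Ioi.mp hu))]
  unfold pathDeriv
  rw [hev.deriv_eq]
  exact deriv_comp_affine (fun v => β v i) 2 1 two_ne_zero s

lemma pathDeriv_intInt {α : ℝ → (Fin n → ℝ)} (hα : PiecewiseSmooth α) (i : Fin n) :
    IntervalIntegrable (pathDeriv α i) volume 0 1 := by
  obtain ⟨k, s, ⟨h0, h1, hmono⟩, hsm⟩ := hα
  have piece : ∀ j : Fin k,
      IntervalIntegrable (pathDeriv α i) volume (s j.castSucc) (s j.succ) := by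
    intro j
    have hab : s j.castSucc < s j.succ := hmono (Fin.castSucc_lt_succ (i := j))
    set a := s j.castSucc
    set b := s j.succ
    have hcd : ContDiffOn ℝ (⊤ : ℕ∞) (fun u => α u i) (Icc a b) := contDiffOn_pi.mp (hsm j) i
    have hud : UniqueDiffOn ℝ (Icc a b) := uniqueDiffOn_Icc hab
    have hcont : ContinuousOn (derivWithin (fun u => α u i) (Icc a b)) (Icc a b) :=
      hcd.continuousOn_derivWithin hud (by simp)
    have hI : IntegrableOn (derivWithin (fun u => α u i) (Icc a b)) (Icc a b) volume :=
      hcont.integrableOn_Icc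
    have hEq : EqOn (derivWithin (fun u => α u i) (Icc a b)) (pathDeriv α i) (Ioo a b) :=
      fun t ht => derivWithin_of_mem_nhds (Icc_mem_nhds ht.1 ht.2)
    have hI2 : IntegrableOn (pathDeriv α i) (Ioo a b) volume :=
      ((hI.mono_set Ioo_subset_Icc_self).congr_fun hEq measurableSet_Ioo)
    have hI3 : IntegrableOn (pathDeriv α i) (Ioc a b) volume :=
      hI2.congr_set_ae MeasureTheory.Ioo_ae_eq_Ioc.symm
    exact (intervalIntegrable_iff_integrableOn_Ioc_of_le hab.le).mpr hI3
  have step : ∀ j : Fin (k + 1), IntervalIntegrable (pathDeriv α i) volume (s 0) (s j) := by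
    intro j
    induction j using Fin.induction with
    | zero => exact IntervalIntegrable.refl
    | succ j ih => exact ih.trans (piece j)
  have := step (Fin.last k)
  rwa [h0, h1] at this

lemma pathDeriv_pconcat_intInt {α β : ℝ → (Fin n → ℝ)} (hα : PiecewiseSmooth α)
    (hβ : PiecewiseSmooth β) (i : Fin n) :
    IntervalIntegrable (pathDeriv (pconcat α β) i) volume 0 1 := by
  have h1 : IntervalIntegrable (pathDeriv (pconcat α β) i) volume 0 (1 / 2) := by
    have ha := ((pathDeriv_intInt hα i).comp_mul_left (c := 2)).const_mul 2
    norm_num at ha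
    rw [intervalIntegrable_iff_integrableOn_Ioc_of_le (by norm_num : (0:ℝ) ≤ 1 / 2)] at ha ⊢
    refine ha.congr ?_
    filter_upwards [MeasureTheory.ae_restrict_of_ae (ae_ne_const (1 / 2)),
      MeasureTheory.ae_restrict_mem measurableSet_Ioc] with x hx hxm
    exact (pathDeriv_concat_lt α β i (lt_of_le_of_ne hxm.2 hx)).symm
  have h2 : IntervalIntegrable (pathDeriv (pconcat α β) i) volume (1 / 2) 1 := by
    have hb := (((pathDeriv_intInt hβ i).comp_sub_right 1).comp_mul_left (c := 2)).const_mul 2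
    norm_num at hb
    rw [intervalIntegrable_iff_integrableOn_Ioc_of_le (by norm_num : (1:ℝ) / 2 ≤ 1)] at hb ⊢
    refine hb.congr ?_
    filter_upwards [MeasureTheory.ae_restrict_mem measurableSet_Ioc] with x hxm
    exact (pathDeriv_concat_gt α β i hxm.1).symm
  exact h1.trans h2

lemma chenS_aux (γ : ℝ → (Fin n → ℝ))
    (hγ : ∀ i, IntervalIntegrable (pathDeriv γ i) volume 0 1) (L : List (Fin n)) :
    ContinuousOn (chenS γ L) (Icc 0 1) ∧
      ∀ i, IntervalIntegrable (fun t => chenS γ L t * pathDeriv γ i t) volume 0 1 := by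
  induction L with
  | nil =>
    refine ⟨continuousOn_const, fun i => ?_⟩
    simpa [chenS] using hγ i
  | cons j is ih =>
    have hInt : IntegrableOn (fun t => chenS γ is t * pathDeriv γ j t) (uIcc 0 1) volume := by
      rw [uIcc_of_le (by norm_num : (0:ℝ) ≤ 1)]
      exact (intervalIntegrable_iff_integrableOn_Icc_of_le (by norm_num)).mp (ih.2 j)
    have hcont : ContinuousOn (chenS γ (j :: is)) (Icc 0 1) := by
      have h := intervalIntegral.continuousOn_primitive_interval hInt
      rw [uIcc_of_le (by norm_num : (0:ℝ) ≤ 1)] at h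
      exact h
    refine ⟨hcont, fun i => ?_⟩
    refine (hγ i).continuousOn_mul ?_
    rw [uIcc_of_le (by norm_num : (0:ℝ) ≤ 1)]
    exact hcont

lemma integral_comp_two_mul (F : ℝ → ℝ) (a b : ℝ) :
    (2:ℝ) * ∫ s in a..b, F (2 * s) = ∫ u in (2*a)..(2*b), F u := by
  have h := intervalIntegral.smul_integral_comp_mul_left F (a := a) (b := b) 2
  simpa [smul_eq_mul] using h

lemma integral_comp_two_sub_one (F : ℝ → ℝ) (a b : ℝ) :
    (2:ℝ) * ∫ s in a..b, F (2 * s - 1) = ∫ u in (2*a-1)..(2*b-1), F u := by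
  have h := intervalIntegral.integral_comp_mul_sub F (a := a) (b := b) two_ne_zero 1
  rw [h, smul_eq_mul]
  ring

lemma chenS_concat_left (α β : ℝ → (Fin n → ℝ)) (L : List (Fin n)) :
    ∀ t ∈ Icc (0:ℝ) (1 / 2), chenS (pconcat α β) L t = chenS α L (2 * t) := by
  induction L with
  | nil => intro t _; rfl
  | cons j is ih =>
    intro t ht
    have key : (∫ s in (0:ℝ)..t, chenS (pconcat α β) is s * pathDeriv (pconcat α β) j s)
        = ∫ s in (0:ℝ)..t,
            2 * ((fun u => chenS α is u * pathDeriv α j u) (2 * s)) := by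
      apply intervalIntegral.integral_congr_ae
      filter_upwards [ae_ne_const (1 / 2)] with x hx hmem
      have hxt : x ∈ Ioc 0 t := by rwa [uIoc_of_le ht.1] at hmem
      have hx2 : x < 1 / 2 := lt_of_le_of_ne (hxt.2.trans ht.2) hx
      rw [pathDeriv_concat_lt α β j hx2, ih x ⟨hxt.1.le, hxt.2.trans ht.2⟩]
      ring
    show (∫ s in (0:ℝ)..t, chenS (pconcat α β) is s * pathDeriv (pconcat α β) j s)
        = ∫ s in (0:ℝ)..(2 * t), chenS α is s * pathDeriv α j s
    rw [key, intervalIntegral.integral_const_mul,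
      integral_comp_two_mul (fun u => chenS α is u * pathDeriv α j u) 0 t, mul_zero]

lemma chenS_concat_right (α β : ℝ → (Fin n → ℝ)) (hα : PiecewiseSmooth α)
    (hβ : PiecewiseSmooth β) (L : List (Fin n)) :
    ∀ t ∈ Icc (1/2 : ℝ) 1,
      chenS (pconcat α β) L t =
        ∑ k ∈ Finset.range (L.length + 1),
          chenS β (L.take k) (2 * t - 1) * chenS α (L.drop k) 1 := by
  have hγpd : ∀ i, IntervalIntegrable (pathDeriv (pconcat α β) i) volume 0 1 :=
    pathDeriv_pconcat_intInt hα hβ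
  have hβpd : ∀ i, IntervalIntegrable (pathDeriv β i) volume 0 1 := pathDeriv_intInt hβ
  induction L with
  | nil => intro t ht; simp [chenS]
  | cons j is ih =>
    intro t ht
    have hint : IntervalIntegrable
        (fun s => chenS (pconcat α β) is s * pathDeriv (pconcat α β) j s) volume 0 1 :=
      (chenS_aux (pconcat α β) hγpd is).2 j
    have hsub1 : uIcc (0:ℝ) (1/2) ⊆ uIcc (0:ℝ) 1 := by
      rw [uIcc_of_le (by norm_num : (0:ℝ) ≤ 1/2), uIcc_of_le (by norm_num : (0:ℝ) ≤ 1)]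
      exact Icc_subset_Icc le_rfl (by norm_num)
    have hsub2 : uIcc (1/2 : ℝ) t ⊆ uIcc (0:ℝ) 1 := by
      rw [uIcc_of_le ht.1, uIcc_of_le (by norm_num : (0:ℝ) ≤ 1)]
      exact Icc_subset_Icc (by norm_num) ht.2
    have hsub3 : uIcc (1/2 : ℝ) t ⊆ uIcc (1/2:ℝ) 1 := by
      rw [uIcc_of_le ht.1, uIcc_of_le (by norm_num : (1:ℝ)/2 ≤ 1)]
      exact Icc_subset_Icc le_rfl ht.2
    have hsplit : chenS (pconcat α β) (j :: is) t
        = chenS (pconcat α β) (j :: is) (1/2)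
          + ∫ s in (1/2:ℝ)..t, chenS (pconcat α β) is s * pathDeriv (pconcat α β) j s := by
      show (∫ s in (0:ℝ)..t, chenS (pconcat α β) is s * pathDeriv (pconcat α β) j s) = _
      rw [← intervalIntegral.integral_add_adjacent_intervals
        (hint.mono_set hsub1) (hint.mono_set hsub2)]
      rfl
    have hfirst : chenS (pconcat α β) (j :: is) (1/2) = chenS α (j :: is) 1 := by
      have h := chenS_concat_left α β (j :: is) (1/2) ⟨by norm_num, le_rfl⟩
      norm_num at h
      exact h
    have key : (∫ s in (1/2:ℝ)..t, chenS (pconcat α β) is s * pathDeriv (pconcat α β) j s)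
        = ∫ s in (1/2:ℝ)..t, ∑ k ∈ Finset.range (is.length + 1),
            2 * ((fun u => chenS β (is.take k) u * pathDeriv β j u) (2 * s - 1))
              * chenS α (is.drop k) 1 := by
      apply intervalIntegral.integral_congr_ae
      filter_upwards with x hmem
      have hxt : x ∈ Ioc (1/2:ℝ) t := by rwa [uIoc_of_le ht.1] at hmem
      rw [pathDeriv_concat_gt α β j hxt.1, ih x ⟨hxt.1.le, hxt.2.trans ht.2⟩,
        Finset.sum_mul]
      refine Finset.sum_congr rfl fun k _ => ?_
      ring
    have hsummand : ∀ k ∈ Finset.range (is.length + 1), IntervalIntegrable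
        (fun s => 2 * ((fun u => chenS β (is.take k) u * pathDeriv β j u) (2 * s - 1))
          * chenS α (is.drop k) 1) volume (1/2) t := by
      intro k _
      have h0 : IntervalIntegrable (fun u => chenS β (is.take k) u * pathDeriv β j u)
          volume 0 1 := (chenS_aux β hβpd (is.take k)).2 j
      have h1 := (h0.comp_sub_right 1).comp_mul_left (c := 2)
      norm_num at h1
      exact ((h1.mono_set hsub3).const_mul 2).mul_const _
    have heach : ∀ k ∈ Finset.range (is.length + 1),
        (∫ s in (1/2:ℝ)..t,
            2 * ((fun u => chenS β (is.take k) u * pathDeriv β j u) (2 * s - 1))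
              * chenS α (is.drop k) 1)
          = chenS β (j :: is.take k) (2 * t - 1) * chenS α (is.drop k) 1 := by
      intro k _
      rw [intervalIntegral.integral_mul_const, intervalIntegral.integral_const_mul]
      congr 1
      have h2 := integral_comp_two_sub_one
        (fun u => chenS β (is.take k) u * pathDeriv β j u) (1/2) t
      norm_num at h2
      show (2:ℝ) * ∫ s in (1/2:ℝ)..t,
          (fun u => chenS β (is.take k) u * pathDeriv β j u) (2 * s - 1)
        = ∫ u in (0:ℝ)..(2 * t - 1), chenS β (is.take k) u * pathDeriv β j u
      convert h2 using 2 <;> norm_num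
    rw [hsplit, hfirst, key, intervalIntegral.integral_finset_sum hsummand,
      Finset.sum_congr rfl heach, List.length_cons,
      Finset.sum_range_succ' (fun x => chenS β (List.take x (j :: is)) (2 * t - 1)
        * chenS α (List.drop x (j :: is)) 1) (is.length + 1)]
    simp only [List.take_succ_cons, List.drop_succ_cons, List.take_zero, List.drop_zero]
    rw [show chenS β ([] : List (Fin n)) (2 * t - 1) = 1 from rfl, one_mul]
    ring

end ConcatAux


/-- **Chen's concatenation formula.** For piecewise smooth paths `α, β`
with `α 1 = β 0` and any nonempty index sequence `l = [i₁, …, i_p]`,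
`∫_{α·β} dx_{i₁}⋯dx_{i_p} = Σ_{k=0}^p (∫_α dx_{i₁}⋯dx_{i_k})·(∫_β dx_{i_{k+1}}⋯dx_{i_p})`,
the empty iterated integral being `1`. Hence the signature is multiplicative. -/
theorem elemIterInt_concat {n : ℕ} (α β : ℝ → (Fin n → ℝ))
    (hα : PiecewiseSmooth α) (hβ : PiecewiseSmooth β) (hαβ : α 1 = β 0)
    (l : List (Fin n)) (hl : l ≠ []) :
    elemIterInt (pconcat α β) l =
      ∑ k ∈ Finset.range (l.length + 1),
        elemIterInt α (l.take k) * elemIterInt β (l.drop k) := by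
  have h := chenS_concat_right α β hα hβ l.reverse 1 ⟨by norm_num, le_rfl⟩
  norm_num at h
  unfold elemIterInt
  rw [h]
  rw [← Finset.sum_range_reflect
    (fun k => chenS α (List.take k l).reverse 1 * chenS β (List.drop k l).reverse 1)
    (l.length + 1)]
  refine Finset.sum_congr rfl fun k hk => ?_
  have hk' : k ≤ l.length := Nat.lt_succ_iff.mp (Finset.mem_range.mp hk)
  have e1 : (List.take (l.length + 1 - 1 - k) l).reverse = l.reverse.drop k := by
    rw [List.reverse_take]
    congr 1
    omega
  have e2 : (List.drop (l.length + 1 - 1 - k) l).reverse = l.reverse.take k := by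
    rw [List.reverse_drop]
    congr 1
    omega
  rw [e1, e2]
  ring

end ChenPaper
end
end

section
/- Let f₁,…,f_p:[a,b]→ℝ be continuous and let 0≤i≤p. For each subset S⊆{1,…,p} of cardinality i, let (j₁^S,…,j_p^S) be the permutation of (1,…,p) that places 1,…,i (in this order) at the positions of S and i+1,…,p (in this order) at the complementary positions. Then (∫_a^b f₁dt⋯f_idt)·(∫_a^b f_{i+1}dt⋯f_pdt) = Σ_{S⊆{1,…,p}, |S|=i} ∫_a^b f_{j₁^S}dt⋯f_{j_p^S}dt. In particular, the product of two iterated integrals of the functions f₁,…,f_p is a linear combination of iterated integrals ∫_a^b f_{i₁}dt⋯f_{i_p}dt. -/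
/-!
Both sides vanish at `b = a`, and as functions of `b` they have the same derivative. By the product
rule the derivative of the left side is a sum of two products of the same shape, one with the last
function of the first factor peeled off and one with the last function of the second factor
peeled off, and induction on `p` turns each into a sum of iterated integrals. The derivative of
the right side peels off the function in the last position, and splitting the subsets `S` according
to whether they contain that position matches the two sums term by term.

Iterated integrals over `[a, b]` do not see values outside `[a, b]`, so the functions may first be
extended continuously from `[a, b]` to `ℝ`, where the fundamental theorem of calculus applies
everywhere.
-/

open Set
noncomputable section
namespace ChenPaper

/-- `itIntAux a [f_q, …, f₁] b = ∫_a^b f₁dt⋯f_qdt` (note the reversed list). -/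
def itIntAux (a : ℝ) : List (ℝ → ℝ) → ℝ → ℝ
  | [], _ => 1
  | f :: fs, b => ∫ s in a..b, itIntAux a fs s * f s

/-- The iterated integral `∫_a^b f₁dt f₂dt ⋯ f_qdt`, for `fs = [f₁, …, f_q]`;
the empty iterated integral equals `1`. -/
def iterIntFns (a : ℝ) (fs : List (ℝ → ℝ)) (b : ℝ) : ℝ := itIntAux a fs.reverse b

/-- The shuffle permutation attached to a subset `S ⊆ Fin p`: the position `t` receives
the index `r` if `t` is the `r`-th smallest element of `S` (`r < S.card`), and the index
`S.card + r` if `t` is the `r`-th smallest element of the complement of `S`. -/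
def shuffPerm {p : ℕ} (S : Finset (Fin p)) (t : Fin p) : Fin p :=
  if h : t ∈ S then
    ⟨((S.orderIsoOfFin rfl).symm ⟨t, h⟩ : Fin S.card), by
      have h1 : (((S.orderIsoOfFin rfl).symm ⟨t, h⟩ : Fin S.card) : ℕ) < S.card :=
        Fin.isLt _
      have h2 : S.card ≤ Fintype.card (Fin p) := S.card_le_univ
      simp only [Fintype.card_fin] at h2
      omega⟩
  else
    ⟨S.card + ((Sᶜ.orderIsoOfFin rfl).symm ⟨t, Finset.mem_compl.mpr h⟩ : Fin Sᶜ.card), by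
      have h1 : (((Sᶜ.orderIsoOfFin rfl).symm ⟨t, Finset.mem_compl.mpr h⟩ :
          Fin Sᶜ.card) : ℕ) < Sᶜ.card := Fin.isLt _
      have h2 : S.card + Sᶜ.card = Fintype.card (Fin p) := S.card_add_card_compl
      simp only [Fintype.card_fin] at h2
      omega⟩

open Finset

theorem _root_.List.ofFn_castLE_eq_take {α : Type*} {p i : ℕ} (hi : i ≤ p) (f : Fin p → α) :
    List.ofFn (fun m : Fin i => f (Fin.castLE hi m)) = (List.ofFn f).take i :=
  Fin.ofFn_take_eq_take_ofFn hi f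

theorem _root_.List.ofFn_add_eq_drop {α : Type*} {p i : ℕ} (f : Fin p → α) :
    List.ofFn (fun m : Fin (p - i) => f ⟨i + m, by omega⟩) = (List.ofFn f).drop i :=
  List.ext_getElem (by simp) (by simp)

theorem _root_.List.ofFn_succAbove_eq_eraseIdx {α : Type*} {n : ℕ} (f : Fin (n + 1) → α)
    (i : Fin (n + 1)) :
    List.ofFn (fun j => f (i.succAbove j)) = (List.ofFn f).eraseIdx i := by
  have hlen : ((List.ofFn f).eraseIdx i).length = n := by
    rw [List.length_eraseIdx_of_lt (by simpa using i.isLt)]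
    simp
  refine List.ext_getElem (by rw [hlen, List.length_ofFn]) fun j _ _ => ?_
  rw [List.getElem_ofFn, List.getElem_eraseIdx]
  split_ifs with h
  · rw [List.getElem_ofFn]
    simp [Fin.succAbove, Fin.lt_def, h]
  · simp [Fin.succAbove, Fin.lt_def, h]

theorem _root_.List.take_ofFn_succAbove {α : Type*} {n k : ℕ} (hk : k < n + 1)
    (f : Fin (n + 1) → α) :
    (List.ofFn fun j => f ((⟨k, hk⟩ : Fin (n + 1)).succAbove j)).take k = (List.ofFn f).take k := by
  rw [List.ofFn_succAbove_eq_eraseIdx, List.take_eraseIdx_eq_take_of_le _ _ _ le_rfl]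

theorem _root_.List.drop_ofFn_succAbove {α : Type*} {n k : ℕ} (hk : k < n + 1)
    (f : Fin (n + 1) → α) :
    (List.ofFn fun j => f ((⟨k, hk⟩ : Fin (n + 1)).succAbove j)).drop k =
      (List.ofFn f).drop (k + 1) := by
  rw [List.ofFn_succAbove_eq_eraseIdx, List.eraseIdx_eq_take_drop_succ,
    List.drop_left' (by simp; omega)]

theorem _root_.Finset.val_orderIsoOfFin_symm_apply {α : Type*} [LinearOrder α] (S : Finset α)
    {k : ℕ} (h : #S = k) (x : S) :
    (((S.orderIsoOfFin h).symm x : Fin k) : ℕ) = #{y ∈ S | y < (x : α)} := by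
  set e := S.orderEmbOfFin h
  set r := (S.orderIsoOfFin h).symm x
  have hx : (x : α) = e r := by
    rw [← coe_orderIsoOfFin_apply, OrderIso.apply_symm_apply]
  calc (r : ℕ) = #{j | j < r} := by rw [filter_gt_eq_Iio, Fin.card_Iio]
    _ = #{j | e j < x} := by simp_rw [hx, e.lt_iff_lt]
    _ = #{y ∈ univ.map e.toEmbedding | y < (x : α)} := by rw [filter_map, card_map]; rfl
    _ = #{y ∈ S | y < (x : α)} := by rw [S.map_orderEmbOfFin_univ h]

theorem val_shuffPerm {p : ℕ} (S : Finset (Fin p)) (t : Fin p) :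
    (shuffPerm S t : ℕ) = if t ∈ S then #{x ∈ S | x < t} else #S + #{x ∈ Sᶜ | x < t} := by
  unfold shuffPerm
  split_ifs <;> simp [Finset.val_orderIsoOfFin_symm_apply]

theorem shuffPerm_empty {p : ℕ} : shuffPerm (∅ : Finset (Fin p)) = id := by
  ext t
  simp [val_shuffPerm, filter_gt_eq_Iio]

theorem shuffPerm_univ {p : ℕ} : shuffPerm (univ : Finset (Fin p)) = id := by
  ext t
  simp [val_shuffPerm, filter_gt_eq_Iio]

section Shuffle

variable {q : ℕ}

theorem last_notMem_map_castSuccEmb (T : Finset (Fin q)) : Fin.last q ∉ T.map Fin.castSuccEmb := by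
  simp [Fin.castSucc_ne_last]

theorem card_filter_lt_castSucc_map (T : Finset (Fin q)) (t : Fin q) :
    #{x ∈ T.map Fin.castSuccEmb | x < t.castSucc} = #{x ∈ T | x < t} := by
  rw [filter_map, card_map]
  simp [Function.comp_def]

theorem filter_lt_last_map (T : Finset (Fin q)) :
    {x ∈ T.map Fin.castSuccEmb | x < Fin.last q} = T.map Fin.castSuccEmb :=
  filter_true_of_mem (by simp [Fin.castSucc_lt_last])

theorem compl_map_castSuccEmb (T : Finset (Fin q)) :
    (T.map Fin.castSuccEmb)ᶜ = insert (Fin.last q) (Tᶜ.map Fin.castSuccEmb) := by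
  ext x
  induction x using Fin.lastCases <;> simp [Fin.castSucc_ne_last]

theorem compl_insert_last_map (T : Finset (Fin q)) :
    (insert (Fin.last q) (T.map Fin.castSuccEmb))ᶜ = Tᶜ.map Fin.castSuccEmb := by
  ext x
  induction x using Fin.lastCases <;> simp [Fin.castSucc_ne_last]

theorem shuffPerm_map_castSucc (T : Finset (Fin q)) (t : Fin q) :
    shuffPerm (T.map Fin.castSuccEmb) t.castSucc = (shuffPerm T t).castSucc := by
  ext
  by_cases ht : t ∈ T <;>
    simp [val_shuffPerm, ht, compl_map_castSuccEmb, filter_insert, card_filter_lt_castSucc_map,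
      (Fin.castSucc_lt_last t).not_gt]

theorem shuffPerm_map_last (T : Finset (Fin q)) :
    shuffPerm (T.map Fin.castSuccEmb) (Fin.last q) = Fin.last q := by
  ext
  rw [val_shuffPerm, if_neg (last_notMem_map_castSuccEmb T), compl_map_castSuccEmb, filter_insert,
    if_neg (lt_irrefl _), filter_lt_last_map, card_map, card_map, Fin.val_last]
  simp

theorem shuffPerm_insert_last_castSucc {k : ℕ} (hk : k < q + 1) {T : Finset (Fin q)} (hT : #T = k)
    (t : Fin q) :
    shuffPerm (insert (Fin.last q) (T.map Fin.castSuccEmb)) t.castSucc =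
      (⟨k, hk⟩ : Fin (q + 1)).succAbove (shuffPerm T t) := by
  have hval := val_shuffPerm T t
  have hlast : ¬Fin.last q < t.castSucc := (Fin.castSucc_lt_last t).not_gt
  by_cases ht : t ∈ T
  · rw [if_pos ht] at hval
    have hlt : (shuffPerm T t).castSucc < ⟨k, hk⟩ := by
      rw [Fin.lt_def, Fin.val_castSucc, hval]
      exact hT ▸ card_lt_card (filter_ssubset.2 ⟨t, ht, lt_irrefl t⟩)
    ext
    rw [Fin.succAbove_of_castSucc_lt _ _ hlt, val_shuffPerm, if_pos (by simpa using ht),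
      filter_insert, if_neg hlast, card_filter_lt_castSucc_map, Fin.val_castSucc, hval]
  · rw [if_neg ht] at hval
    have hle : ⟨k, hk⟩ ≤ (shuffPerm T t).castSucc := by simp [Fin.le_def, hval, hT]
    ext
    rw [Fin.succAbove_of_le_castSucc _ _ hle, val_shuffPerm, if_neg (by simpa using ht),
      compl_insert_last_map, card_filter_lt_castSucc_map, card_insert_of_notMem
      (last_notMem_map_castSuccEmb T), card_map, Fin.val_succ, hval, hT]
    ring

theorem shuffPerm_insert_last_last {k : ℕ} (hk : k < q + 1) {T : Finset (Fin q)} (hT : #T = k) :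
    shuffPerm (insert (Fin.last q) (T.map Fin.castSuccEmb)) (Fin.last q) = ⟨k, hk⟩ := by
  ext
  rw [val_shuffPerm, if_pos (mem_insert_self _ _), filter_insert, if_neg (lt_irrefl _),
    filter_lt_last_map, card_map, hT]

theorem sum_powersetCard_succ_fin {M : Type*} [AddCommMonoid M] (F : Finset (Fin (q + 1)) → M)
    (k : ℕ) :
    ∑ S ∈ powersetCard (k + 1) univ, F S =
      ∑ T ∈ powersetCard (k + 1) univ, F (T.map Fin.castSuccEmb) +
        ∑ T ∈ powersetCard k univ, F (insert (Fin.last q) (T.map Fin.castSuccEmb)) := by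
  have hlast : Fin.last q ∉ univ.map Fin.castSuccEmb := last_notMem_map_castSuccEmb univ
  rw [Fin.univ_castSuccEmb, cons_eq_insert, powersetCard_succ_insert hlast, sum_union, sum_image,
    powersetCard_map, powersetCard_map, sum_map, sum_map]
  · rfl
  · intro S hS T hT hST
    rw [mem_coe, mem_powersetCard] at hS hT
    rw [← erase_insert (notMem_mono hS.1 hlast), hST, erase_insert (notMem_mono hT.1 hlast)]
  · rw [Finset.disjoint_left]
    intro S hS hS'
    obtain ⟨T, hT, rfl⟩ := mem_image.1 hS'
    exact notMem_mono (mem_powersetCard.1 hS).1 hlast (mem_insert_self _ _)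

theorem sum_shuffPerm_castSucc_last {M : Type*} [AddCommMonoid M]
    (F : (Fin q → Fin (q + 1)) → Fin (q + 1) → M) {k : ℕ} (hk : k < q + 1) :
    ∑ S ∈ powersetCard (k + 1) univ,
        F (fun t => shuffPerm S t.castSucc) (shuffPerm S (Fin.last q)) =
      ∑ T ∈ powersetCard (k + 1) univ, F (fun t => (shuffPerm T t).castSucc) (Fin.last q) +
        ∑ T ∈ powersetCard k univ,
          F (fun t => (⟨k, hk⟩ : Fin (q + 1)).succAbove (shuffPerm T t)) ⟨k, hk⟩ := by
  rw [sum_powersetCard_succ_fin]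
  congr 1
  · refine sum_congr rfl fun T _ => ?_
    simp only [shuffPerm_map_last, shuffPerm_map_castSucc]
  · refine sum_congr rfl fun T hT => ?_
    have hT : #T = k := (mem_powersetCard.1 hT).2
    simp only [shuffPerm_insert_last_last hk hT, shuffPerm_insert_last_castSucc hk hT]

end Shuffle

section IteratedIntegral

variable (a : ℝ)

theorem iterIntFns_nil (b : ℝ) : iterIntFns a [] b = 1 := rfl

theorem iterIntFns_append_singleton (fs : List (ℝ → ℝ)) (g : ℝ → ℝ) :
    iterIntFns a (fs ++ [g]) = fun b => ∫ s in a..b, iterIntFns a fs s * g s := by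
  ext b
  simp [iterIntFns, itIntAux]

theorem continuous_iterIntFns {fs : List (ℝ → ℝ)} (hfs : ∀ f ∈ fs, Continuous f) :
    Continuous (iterIntFns a fs) := by
  induction fs using List.reverseRecOn with
  | nil => exact continuous_const
  | append_singleton fs g ih =>
    simp only [List.mem_append, List.mem_singleton] at hfs
    have hint : Continuous fun s => iterIntFns a fs s * g s :=
      (ih fun f hf => hfs f (.inl hf)).mul (hfs g (.inr rfl))
    rw [iterIntFns_append_singleton]
    exact intervalIntegral.continuous_primitive (fun u v => hint.intervalIntegrable u v) a

theorem hasDerivAt_iterIntFns_append_singleton {fs : List (ℝ → ℝ)} {g : ℝ → ℝ}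
    (hfs : ∀ f ∈ fs, Continuous f) (hg : Continuous g) (x : ℝ) :
    HasDerivAt (iterIntFns a (fs ++ [g])) (iterIntFns a fs x * g x) x := by
  have hint : Continuous fun s => iterIntFns a fs s * g s := (continuous_iterIntFns a hfs).mul hg
  rw [iterIntFns_append_singleton]
  exact hint.integral_hasStrictDerivAt a x |>.hasDerivAt

theorem iterIntFns_self {fs : List (ℝ → ℝ)} (hfs : fs ≠ []) : iterIntFns a fs a = 0 := by
  obtain ⟨gs, g, rfl⟩ := (List.eq_nil_or_concat' fs).resolve_left hfs
  simp only [iterIntFns_append_singleton, intervalIntegral.integral_same]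

theorem iterIntFns_map_of_eqOn {b x : ℝ} {fs : List (ℝ → ℝ)} {E : (ℝ → ℝ) → ℝ → ℝ}
    (hE : ∀ f ∈ fs, EqOn (E f) f (Icc a b)) (hx : x ∈ Icc a b) :
    iterIntFns a (fs.map E) x = iterIntFns a fs x := by
  induction fs using List.reverseRecOn generalizing x with
  | nil => rfl
  | append_singleton fs g ih =>
    simp only [List.mem_append, List.mem_singleton] at hE
    rw [List.map_append, List.map_singleton, iterIntFns_append_singleton,
      iterIntFns_append_singleton]
    refine intervalIntegral.integral_congr fun s hs => ?_
    have hs : s ∈ Icc a b := by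
      rw [uIcc_of_le hx.1] at hs
      exact ⟨hs.1, hs.2.trans hx.2⟩
    simp only [ih (fun f hf => hE f (.inl hf)) hs, hE g (.inr rfl) hs]

theorem hasDerivAt_iterIntFns_ofFn {n : ℕ} {f : Fin (n + 1) → ℝ → ℝ} (hf : ∀ m, Continuous (f m))
    (x : ℝ) :
    HasDerivAt (iterIntFns a (List.ofFn f))
      (iterIntFns a (List.ofFn fun t => f t.castSucc) x * f (Fin.last n) x) x := by
  rw [List.ofFn_succ', List.concat_eq_append]
  exact hasDerivAt_iterIntFns_append_singleton a (List.forall_mem_ofFn_iff.2 fun _ => hf _) (hf _) x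

end IteratedIntegral

theorem hasDerivAt_iterIntFns_take_mul_drop {q k : ℕ} (hk : k < q) (a : ℝ)
    {f : Fin (q + 1) → ℝ → ℝ} (hf : ∀ m, Continuous (f m)) (x : ℝ) :
    HasDerivAt
      (fun y => iterIntFns a ((List.ofFn f).take (k + 1)) y *
        iterIntFns a ((List.ofFn f).drop (k + 1)) y)
      (iterIntFns a ((List.ofFn fun t => f t.castSucc).take (k + 1)) x *
          iterIntFns a ((List.ofFn fun t => f t.castSucc).drop (k + 1)) x * f (Fin.last q) x +
        iterIntFns a
            ((List.ofFn fun t => f ((⟨k, by omega⟩ : Fin (q + 1)).succAbove t)).take k) x *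
          iterIntFns a
            ((List.ofFn fun t => f ((⟨k, by omega⟩ : Fin (q + 1)).succAbove t)).drop k) x *
            f ⟨k, by omega⟩ x) x := by
  have hcont : ∀ g ∈ List.ofFn f, Continuous g := List.forall_mem_ofFn_iff.2 hf
  have hsplit : List.ofFn f = (List.ofFn fun t => f t.castSucc) ++ [f (Fin.last q)] := by
    rw [List.ofFn_succ', List.concat_eq_append]
  have hlen : k + 1 ≤ (List.ofFn fun t => f t.castSucc).length := by simpa using hk
  have htake : (List.ofFn f).take (k + 1) = (List.ofFn f).take k ++ [f ⟨k, by omega⟩] := by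
    rw [List.take_add_one, List.getElem?_ofFn]
    simp
    omega
  have hdrop : (List.ofFn f).drop (k + 1) =
      (List.ofFn fun t => f t.castSucc).drop (k + 1) ++ [f (Fin.last q)] := by
    rw [hsplit, List.drop_append_of_le_length hlen]
  have hA := hasDerivAt_iterIntFns_append_singleton a (fs := (List.ofFn f).take k)
    (fun g hg => hcont g (List.mem_of_mem_take hg)) (hf ⟨k, by omega⟩) x
  have hB := hasDerivAt_iterIntFns_append_singleton a
    (fs := (List.ofFn fun t => f t.castSucc).drop (k + 1))
    (fun g hg => hcont g (hsplit ▸ List.mem_append_left _ (List.mem_of_mem_drop hg)))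
    (hf (Fin.last q)) x
  rw [← htake] at hA
  rw [← hdrop] at hB
  refine (hA.mul hB).congr_deriv ?_
  rw [List.take_ofFn_succAbove, List.drop_ofFn_succAbove, hsplit,
    List.take_append_of_le_length hlen, ← hsplit]
  ring

theorem iterIntFns_take_mul_drop_succ {q k : ℕ} (hk : k < q) (a : ℝ)
    (f : Fin (q + 1) → ℝ → ℝ) (hf : ∀ m, Continuous (f m))
    (ih : ∀ g : Fin q → ℝ → ℝ, (∀ m, Continuous (g m)) → ∀ j ≤ q, ∀ x,
      iterIntFns a ((List.ofFn g).take j) x * iterIntFns a ((List.ofFn g).drop j) x =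
        ∑ S ∈ powersetCard j univ, iterIntFns a (List.ofFn fun t => g (shuffPerm S t)) x)
    (b : ℝ) :
    iterIntFns a ((List.ofFn f).take (k + 1)) b * iterIntFns a ((List.ofFn f).drop (k + 1)) b =
      ∑ S ∈ powersetCard (k + 1) univ, iterIntFns a (List.ofFn fun t => f (shuffPerm S t)) b := by
  have hF := hasDerivAt_iterIntFns_take_mul_drop hk a hf
  have hG : ∀ x, HasDerivAt
      (fun y => ∑ S ∈ powersetCard (k + 1) univ,
        iterIntFns a (List.ofFn fun t => f (shuffPerm S t)) y)
      (∑ S ∈ powersetCard (k + 1) univ,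
        iterIntFns a (List.ofFn fun t => f (shuffPerm S t.castSucc)) x *
          f (shuffPerm S (Fin.last q)) x) x := fun x =>
    HasDerivAt.fun_sum fun S _ => hasDerivAt_iterIntFns_ofFn a (fun _ => hf _) x
  refine congrFun (eq_of_fderiv_eq (fun x => (hF x).differentiableAt)
    (fun x => (hG x).differentiableAt) (fun x => ?_) a ?_) b
  · rw [← toSpanSingleton_deriv, ← toSpanSingleton_deriv, (hF x).deriv, (hG x).deriv,
      sum_shuffPerm_castSucc_last (fun σ j => iterIntFns a (List.ofFn fun t => f (σ t)) x * f j x),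
      ← sum_mul, ← sum_mul, ← ih _ (fun _ => hf _) (k + 1) hk x, ← ih _ (fun _ => hf _) k hk.le x]
  · simp [iterIntFns_self]

theorem iterIntFns_take_zero_mul_drop {p : ℕ} (a : ℝ) (f : Fin p → ℝ → ℝ) (b : ℝ) :
    iterIntFns a ((List.ofFn f).take 0) b * iterIntFns a ((List.ofFn f).drop 0) b =
      ∑ S ∈ powersetCard 0 univ, iterIntFns a (List.ofFn fun t => f (shuffPerm S t)) b := by
  simp [shuffPerm_empty, iterIntFns_nil]

theorem iterIntFns_take_mul_drop_self {p : ℕ} (a : ℝ) (f : Fin p → ℝ → ℝ) (b : ℝ) :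
    iterIntFns a ((List.ofFn f).take p) b * iterIntFns a ((List.ofFn f).drop p) b =
      ∑ S ∈ powersetCard p univ, iterIntFns a (List.ofFn fun t => f (shuffPerm S t)) b := by
  have : powersetCard p (univ : Finset (Fin p)) = {Finset.univ} := by
    simpa using powersetCard_self (univ : Finset (Fin p))
  rw [List.take_of_length_le (by simp), List.drop_of_length_le (by simp), iterIntFns_nil, mul_one,
    this, sum_singleton, shuffPerm_univ]
  rfl

theorem iterIntFns_take_mul_drop {p : ℕ} (a : ℝ) (f : Fin p → ℝ → ℝ) (hf : ∀ m, Continuous (f m))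
    {i : ℕ} (hi : i ≤ p) (b : ℝ) :
    iterIntFns a ((List.ofFn f).take i) b * iterIntFns a ((List.ofFn f).drop i) b =
      ∑ S ∈ powersetCard i univ, iterIntFns a (List.ofFn fun t => f (shuffPerm S t)) b := by
  induction p generalizing i b with
  | zero =>
    obtain rfl : i = 0 := by omega
    exact iterIntFns_take_zero_mul_drop a f b
  | succ q ih =>
    rcases i with _ | k
    · exact iterIntFns_take_zero_mul_drop a f b
    rcases hi.eq_or_lt with h | h
    · rw [h]
      exact iterIntFns_take_mul_drop_self a f b
    exact iterIntFns_take_mul_drop_succ (by omega) a f hf (fun g hg j hj x => ih g hg hj x) b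

/-- The product of the iterated integrals of `f₁,…,f_i` and of
`f_{i+1},…,f_p` over `[a,b]` equals the sum, over all subsets `S ⊆ {1,…,p}` of
cardinality `i`, of the iterated integral of the shuffle `f_{j₁^S},…,f_{j_p^S}` placing
`f₁,…,f_i` (in order) at the positions of `S` and `f_{i+1},…,f_p` (in order) at the
complementary positions. In particular the product of two iterated integrals is a linear
combination of iterated integrals. (Functions are `0`-indexed here: `f m` is `f_{m+1}`.) -/
theorem iterInt_mul_shuffle (p i : ℕ) (hi : i ≤ p) (a b : ℝ) (hab : a ≤ b)
    (f : Fin p → ℝ → ℝ) (hf : ∀ m, ContinuousOn (f m) (Icc a b)) :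
    iterIntFns a (List.ofFn fun m : Fin i => f (Fin.castLE hi m)) b *
      iterIntFns a (List.ofFn fun m : Fin (p - i) =>
        f ⟨i + m.val, by have := m.isLt; omega⟩) b =
    ∑ S ∈ Finset.powersetCard i (Finset.univ : Finset (Fin p)),
      iterIntFns a (List.ofFn fun t : Fin p => f (shuffPerm S t)) b := by
  set E : (ℝ → ℝ) → ℝ → ℝ := fun g => IccExtend hab ((Icc a b).domRestrict g)
  have hE : ∀ g, EqOn (E g) g (Icc a b) := fun g x hx => IccExtend_of_mem hab _ hx
  have hmap : ∀ {n} (g : Fin n → ℝ → ℝ), List.ofFn (fun t => E (g t)) = (List.ofFn g).map E :=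
    fun g => by rw [List.map_ofFn]; rfl
  have key := iterIntFns_take_mul_drop a (fun m => E (f m))
    (fun m => (hf m).domRestrict.Icc_extend') hi b
  simp only [hmap, ← List.map_take, ← List.map_drop,
    iterIntFns_map_of_eqOn a (fun g _ => hE g) (right_mem_Icc.2 hab)] at key
  rw [List.ofFn_castLE_eq_take, List.ofFn_add_eq_drop, key]

end ChenPaper
end
end

section
/- Fix q≥1, monomial functions g₁,…,g_q on ℝⁿ (each of the form g(x) = x₁^{m₁}⋯xₙ^{mₙ}), indices j₁,…,j_q ∈ {1,…,n}, and a point x₀ ∈ ℝⁿ. Then there exist finitely many index sequences (i₁,…,i_p) in {1,…,n} (of varying lengths p≥1) and real coefficients c_{(i₁,…,i_p)}, together with a constant c₀, such that for EVERY piecewise smooth path γ:[0,1]→ℝⁿ with γ(0)=x₀: ∫_γ g₁dx_{j₁} g₂dx_{j₂}⋯g_qdx_{j_q} = c₀ + Σ c_{(i₁,…,i_p)} ∫_γ dx_{i₁}⋯dx_{i_p}. In particular, if all elementary iterated integrals of γ vanish, then every iterated integral along γ of one-forms with monomial (hence polynomial) coefficients vanishes. -/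
open Set MeasureTheory intervalIntegral Topology
open scoped Manifold

noncomputable section

namespace ChenPaper

variable {E : Type*} [NormedAddCommGroup E] [NormedSpace ℝ E]

variable {n : ℕ}

/-- The monomial function `x ↦ x₁^{m₁} ⋯ xₙ^{mₙ}` on `ℝⁿ`. -/
def monomialFn {n : ℕ} (m : Fin n → ℕ) : (Fin n → ℝ) → ℝ :=
  fun x => ∏ i : Fin n, x i ^ m i

/-- `witAux γ [(g_q, j_q), …, (g₁, j₁)] t` is the weighted iterated integral
`∫_{0 ≤ t₁ ≤ ⋯ ≤ t_q ≤ t} g₁(γ(t₁))γ'_{j₁}(t₁) ⋯ g_q(γ(t_q))γ'_{j_q}(t_q)`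
(note the reversed list). -/
def witAux (γ : ℝ → (Fin n → ℝ)) : List (((Fin n → ℝ) → ℝ) × Fin n) → ℝ → ℝ
  | [], _ => 1
  | gj :: rest, t => ∫ s in (0:ℝ)..t, witAux γ rest s * (gj.1 (γ s) * pathDeriv γ gj.2 s)

/-- The weighted iterated integral `∫_γ g₁dx_{j₁} g₂dx_{j₂} ⋯ g_qdx_{j_q}`, for the list
`[(g₁, j₁), …, (g_q, j_q)]` in natural order. -/
def weightedIterInt (γ : ℝ → (Fin n → ℝ))
    (l : List (((Fin n → ℝ) → ℝ) × Fin n)) : ℝ :=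
  witAux γ l.reverse 1


/-- "Good" integrands: a.e. strongly measurable, bounded, supported in `[0,1]`,
continuous off a countable set in `(0,1)`. -/
def Good (f : ℝ → ℝ) : Prop :=
  AEStronglyMeasurable f volume ∧
  (∃ C, ∀ t, |f t| ≤ C) ∧
  (∀ t, t ∉ Icc (0:ℝ) 1 → f t = 0) ∧
  ∃ E : Set ℝ, E.Countable ∧ ∀ t ∈ Ioo (0:ℝ) 1 \ E, ContinuousAt f t

/-- "Piecewise continuous" multipliers: continuous on `[0,1]`, continuous off a countable
set in `(0,1)`. -/
def PC (h : ℝ → ℝ) : Prop :=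
  ContinuousOn h (Icc 0 1) ∧
  ∃ E : Set ℝ, E.Countable ∧ ∀ t ∈ Ioo (0:ℝ) 1 \ E, ContinuousAt h t

theorem continuous_pc {h : ℝ → ℝ} (hh : Continuous h) : PC h :=
  ⟨hh.continuousOn, ∅, countable_empty, fun t _ => hh.continuousAt⟩

theorem PC.mul {g h : ℝ → ℝ} (hg : PC g) (hh : PC h) : PC (fun t => g t * h t) := by
  obtain ⟨hg1, Eg, hEg, hg2⟩ := hg
  obtain ⟨hh1, Eh, hEh, hh2⟩ := hh
  exact ⟨hg1.mul hh1, Eg ∪ Eh, hEg.union hEh, fun t ht =>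
    (hg2 t ⟨ht.1, fun h => ht.2 (Or.inl h)⟩).mul (hh2 t ⟨ht.1, fun h => ht.2 (Or.inr h)⟩)⟩

theorem Good.intervalIntegrable {f : ℝ → ℝ} (hf : Good f) (a b : ℝ) :
    IntervalIntegrable f volume a b := by
  obtain ⟨hm, ⟨C, hC⟩, -, -⟩ := hf
  rw [intervalIntegrable_iff]
  refine Measure.integrableOn_of_bounded (M := C) measure_Ioc_lt_top.ne hm ?_
  filter_upwards with t using (by simpa using hC t)

theorem Good.nonneg_bound {f : ℝ → ℝ} {C : ℝ} (hC : ∀ t, |f t| ≤ C) : 0 ≤ C :=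
  le_trans (abs_nonneg _) (hC 0)

theorem Good.mul_pc {h f : ℝ → ℝ} (hh : PC h) (hf : Good f) :
    Good (fun t => h t * f t) := by
  obtain ⟨hh1, Eh, hEh, hh2⟩ := hh
  obtain ⟨hm, ⟨C, hC⟩, hsupp, Ef, hEf, hf2⟩ := hf
  obtain ⟨Ch, hCh⟩ := (isCompact_Icc (a := (0:ℝ)) (b := 1)).exists_bound_of_continuousOn hh1
  refine ⟨?_, ⟨Ch * C, ?_⟩, ?_, Eh ∪ Ef, hEh.union hEf, ?_⟩
  · have heq : (fun t => h t * f t) = fun t => (Icc (0:ℝ) 1).indicator h t * f t := by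
      funext t
      by_cases ht : t ∈ Icc (0:ℝ) 1
      · rw [indicator_of_mem ht]
      · rw [hsupp t ht, mul_zero, mul_zero]
    rw [heq]
    have : AEStronglyMeasurable ((Icc (0:ℝ) 1).indicator h) volume :=
      (aestronglyMeasurable_indicator_iff measurableSet_Icc).mpr
        (hh1.aestronglyMeasurable measurableSet_Icc)
    exact this.mul hm
  · intro t
    have hCh0 : (0:ℝ) ≤ Ch := le_trans (norm_nonneg _) (hCh 0 (by norm_num))
    show |h t * f t| ≤ Ch * C
    by_cases ht : t ∈ Icc (0:ℝ) 1
    · rw [abs_mul]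
      exact mul_le_mul (by simpa using hCh t ht) (hC t) (abs_nonneg _) hCh0
    · rw [hsupp t ht, mul_zero, abs_zero]
      exact mul_nonneg hCh0 (Good.nonneg_bound hC)
  · intro t ht; show h t * f t = 0; rw [hsupp t ht, mul_zero]
  · intro t ht
    exact (hh2 t ⟨ht.1, fun h => ht.2 (Or.inl h)⟩).mul (hf2 t ⟨ht.1, fun h => ht.2 (Or.inr h)⟩)

theorem Good.mul {f g : ℝ → ℝ} (hf : Good f) (hg : Good g) :
    Good (fun t => f t * g t) := by
  obtain ⟨hm, ⟨C, hC⟩, hsupp, Ef, hEf, hf2⟩ := hf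
  obtain ⟨hm', ⟨C', hC'⟩, hsupp', Eg, hEg, hg2⟩ := hg
  refine ⟨hm.mul hm', ⟨C * C', fun t => ?_⟩, fun t ht => by show f t * g t = 0; rw [hsupp t ht, zero_mul],
    Ef ∪ Eg, hEf.union hEg, fun t ht =>
      (hf2 t ⟨ht.1, fun h => ht.2 (Or.inl h)⟩).mul (hg2 t ⟨ht.1, fun h => ht.2 (Or.inr h)⟩)⟩
  rw [abs_mul]
  exact mul_le_mul (hC t) (hC' t) (abs_nonneg _) (Good.nonneg_bound hC)

theorem Good.add {f g : ℝ → ℝ} (hf : Good f) (hg : Good g) :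
    Good (fun t => f t + g t) := by
  obtain ⟨hm, ⟨C, hC⟩, hsupp, Ef, hEf, hf2⟩ := hf
  obtain ⟨hm', ⟨C', hC'⟩, hsupp', Eg, hEg, hg2⟩ := hg
  refine ⟨hm.add hm', ⟨C + C', fun t => (abs_add_le _ _).trans (add_le_add (hC t) (hC' t))⟩,
    fun t ht => by show f t + g t = 0; rw [hsupp t ht, hsupp' t ht, add_zero],
    Ef ∪ Eg, hEf.union hEg, fun t ht =>
      (hf2 t ⟨ht.1, fun h => ht.2 (Or.inl h)⟩).add (hg2 t ⟨ht.1, fun h => ht.2 (Or.inr h)⟩)⟩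

/-- Primitive of a good function. -/
theorem Good.continuous_primitive {f : ℝ → ℝ} (hf : Good f) :
    Continuous (fun t => ∫ u in (0:ℝ)..t, f u) :=
  intervalIntegral.continuous_primitive (fun a b => hf.intervalIntegrable a b) 0

theorem Good.hasDerivAt_primitive {f : ℝ → ℝ} (hf : Good f) :
    ∃ E : Set ℝ, E.Countable ∧ ∀ t ∈ Ioo (0:ℝ) 1 \ E,
      HasDerivAt (fun u => ∫ x in (0:ℝ)..u, f x) (f t) t := by
  have hfi := hf.intervalIntegrable
  obtain ⟨hm, -, -, E, hE, hf2⟩ := hf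
  refine ⟨E, hE, fun t ht => ?_⟩
  exact intervalIntegral.integral_hasDerivAt_right
    (hfi 0 t)
    ⟨univ, Filter.univ_mem, hm.restrict⟩ (hf2 t ht)

/-- Recovery: a continuous function with the right derivative off a countable set is the
primitive of its derivative. -/
theorem recovery {f F : ℝ → ℝ} (hf : Good f) (hF : ContinuousOn F (Icc 0 1)) (hF0 : F 0 = 0)
    {E : Set ℝ} (hE : E.Countable)
    (hd : ∀ t ∈ Ioo (0:ℝ) 1 \ E, HasDerivAt F (f t) t) :
    ∀ t ∈ Icc (0:ℝ) 1, F t = ∫ u in (0:ℝ)..t, f u := by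
  intro t ht
  have := MeasureTheory.integral_eq_of_hasDerivAt_off_countable_of_le F f ht.1 hE
    (hF.mono (Icc_subset_Icc le_rfl ht.2))
    (fun x hx => hd x ⟨⟨hx.1.1, lt_of_lt_of_le hx.1.2 ht.2⟩, hx.2⟩)
    (hf.intervalIntegrable 0 t)
  rw [this, hF0, sub_zero]

/-- Product of two primitives of good functions. -/
theorem primitive_mul {f g : ℝ → ℝ} (hf : Good f) (hg : Good g) :
    ∀ t ∈ Icc (0:ℝ) 1,
      (∫ u in (0:ℝ)..t, f u) * (∫ u in (0:ℝ)..t, g u) =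
        ∫ u in (0:ℝ)..t,
          (f u * (∫ x in (0:ℝ)..u, g x) + (∫ x in (0:ℝ)..u, f x) * g u) := by
  set F := fun t => ∫ u in (0:ℝ)..t, f u with hFdef
  set G := fun t => ∫ u in (0:ℝ)..t, g u with hGdef
  have hFc : Continuous F := hf.continuous_primitive
  have hGc : Continuous G := hg.continuous_primitive
  have hd : Good (fun u => f u * G u + F u * g u) :=
    Good.add (by
      have := Good.mul_pc (continuous_pc hGc) hf
      convert this using 2 with u; ring)
      (Good.mul_pc (continuous_pc hFc) hg)
  obtain ⟨E1, hE1, hdF⟩ := hf.hasDerivAt_primitive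
  obtain ⟨E2, hE2, hdG⟩ := hg.hasDerivAt_primitive
  have := recovery hd ((hFc.mul hGc).continuousOn) (by simp [hFdef, hGdef])
    (hE1.union hE2) (fun t ht => by
      have h1 : HasDerivAt F (f t) t := hdF t ⟨ht.1, fun h => ht.2 (Or.inl h)⟩
      have h2 : HasDerivAt G (g t) t := hdG t ⟨ht.1, fun h => ht.2 (Or.inr h)⟩
      exact h1.mul h2)
  exact this

variable {n : ℕ}

/-- Iterated integrals against a fixed family of "derivative" functions `D`. -/
def cSD (D : Fin n → ℝ → ℝ) : List (Fin n) → ℝ → ℝ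
  | [], _ => 1
  | i :: l, t => ∫ u in (0:ℝ)..t, cSD D l u * D i u

theorem cSD_continuous {D : Fin n → ℝ → ℝ} (hD : ∀ i, Good (D i)) :
    ∀ l : List (Fin n), Continuous (cSD D l)
  | [] => continuous_const
  | i :: l => by
    show Continuous fun t => ∫ u in (0:ℝ)..t, cSD D l u * D i u
    exact Good.continuous_primitive
      (Good.mul_pc (continuous_pc (cSD_continuous hD l)) (hD i))

theorem cSD_good {D : Fin n → ℝ → ℝ} (hD : ∀ i, Good (D i)) (l : List (Fin n)) (i : Fin n) :
    Good (fun t => cSD D l t * D i t) :=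
  Good.mul_pc (continuous_pc (cSD_continuous hD l)) (hD i)

theorem cSD_cons {D : Fin n → ℝ → ℝ} (i : Fin n) (l : List (Fin n)) (t : ℝ) :
    cSD D (i :: l) t = ∫ u in (0:ℝ)..t, cSD D l u * D i u := rfl

theorem cSD_cons_zero {D : Fin n → ℝ → ℝ} (i : Fin n) (l : List (Fin n)) :
    cSD D (i :: l) 0 = 0 := by
  rw [cSD_cons, intervalIntegral.integral_same]

theorem cSD_hasDerivAt {D : Fin n → ℝ → ℝ} (hD : ∀ i, Good (D i)) (l : List (Fin n))
    (i : Fin n) :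
    ∃ E : Set ℝ, E.Countable ∧ ∀ t ∈ Ioo (0:ℝ) 1 \ E,
      HasDerivAt (cSD D (i :: l)) (cSD D l t * D i t) t := by
  obtain ⟨E, hE, h⟩ := (cSD_good hD l i).hasDerivAt_primitive
  exact ⟨E, hE, fun t ht => h t ht⟩

/-- All single insertions of a letter `i` into a word. -/
def insl (i : Fin n) : List (Fin n) → List (List (Fin n))
  | [] => [[i]]
  | a :: l => (i :: a :: l) :: (insl i l).map (a :: ·)

theorem integral_list_sum {D : Fin n → ℝ → ℝ} (hD : ∀ i, Good (D i)) (a : Fin n) (t : ℝ)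
    (L : List (List (Fin n))) :
    ∫ u in (0:ℝ)..t, (L.map (fun w => cSD D w u)).sum * D a u =
      (L.map (fun w => cSD D (a :: w) t)).sum := by
  induction L with
  | nil => simp
  | cons w L ih =>
    have h1 : Good (fun u => cSD D w u * D a u) := cSD_good hD w a
    have h2 : Good (fun u => (L.map (fun v => cSD D v u)).sum * D a u) := by
      refine Good.mul_pc (continuous_pc ?_) (hD a)
      have : ∀ (L' : List (List (Fin n))), Continuous fun u => (L'.map (fun v => cSD D v u)).sum := by
        intro L'
        induction L' with
        | nil => simpa using continuous_const
        | cons v L' ih' =>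
          simp only [List.map_cons, List.sum_cons]; exact (cSD_continuous hD v).add ih'
      exact this L
    have : ∫ u in (0:ℝ)..t, ((w :: L).map (fun v => cSD D v u)).sum * D a u =
        (∫ u in (0:ℝ)..t, cSD D w u * D a u) +
          ∫ u in (0:ℝ)..t, (L.map (fun v => cSD D v u)).sum * D a u := by
      rw [← intervalIntegral.integral_add (h1.intervalIntegrable 0 t)
        (h2.intervalIntegrable 0 t)]
      congr 1; funext u; simp [add_mul]
    rw [this, ih]
    simp [cSD_cons]

theorem cSD_sum_continuous {D : Fin n → ℝ → ℝ} (hD : ∀ i, Good (D i))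
    (L : List (List (Fin n))) :
    Continuous fun u => (L.map (fun v => cSD D v u)).sum := by
  induction L with
  | nil => simpa using continuous_const
  | cons v L ih => simp only [List.map_cons, List.sum_cons]; exact (cSD_continuous hD v).add ih

theorem good_sum_mul {D : Fin n → ℝ → ℝ} (hD : ∀ i, Good (D i))
    (L : List (List (Fin n))) (a : Fin n) :
    Good (fun u => (L.map (fun v => cSD D v u)).sum * D a u) :=
  Good.mul_pc (continuous_pc (cSD_sum_continuous hD L)) (hD a)

/-- One-letter shuffle identity. -/
theorem shuffle_one {D : Fin n → ℝ → ℝ} (hD : ∀ i, Good (D i)) (i : Fin n) :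
    ∀ l : List (Fin n), ∀ t ∈ Icc (0:ℝ) 1,
      cSD D [i] t * cSD D l t = ((insl i l).map (fun w => cSD D w t)).sum := by
  intro l
  induction l with
  | nil => intro t _; simp [insl, cSD]
  | cons a l ih =>
    intro t ht
    have hsub : uIcc (0:ℝ) t ⊆ Icc 0 1 := by
      rw [uIcc_of_le ht.1]; exact Icc_subset_Icc le_rfl ht.2
    have hf : Good (fun u => cSD D [] u * D i u) := cSD_good hD [] i
    have hg : Good (fun u => cSD D l u * D a u) := cSD_good hD l a
    have key := primitive_mul hf hg t ht
    rw [show (∫ u in (0:ℝ)..t, cSD D [] u * D i u) = cSD D [i] t from rfl,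
      show (∫ u in (0:ℝ)..t, cSD D l u * D a u) = cSD D (a :: l) t from rfl] at key
    rw [key]
    have hcongr : EqOn
        (fun u => (cSD D [] u * D i u) * (∫ x in (0:ℝ)..u, cSD D l x * D a x) +
          (∫ x in (0:ℝ)..u, cSD D [] x * D i x) * (cSD D l u * D a u))
        (fun u => cSD D (a :: l) u * D i u +
          ((insl i l).map (fun w => cSD D w u)).sum * D a u) (uIcc (0:ℝ) t) := by
      intro u hu
      have hu1 : u ∈ Icc (0:ℝ) 1 := hsub hu
      show (cSD D [] u * D i u) * cSD D (a :: l) u + cSD D [i] u * (cSD D l u * D a u) =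
        cSD D (a :: l) u * D i u + ((insl i l).map (fun w => cSD D w u)).sum * D a u
      rw [← mul_assoc, ih u hu1]
      simp [cSD]; ring
    rw [intervalIntegral.integral_congr hcongr]
    have hint1 : Good (fun u => cSD D (a :: l) u * D i u) := cSD_good hD (a :: l) i
    have hint2 := good_sum_mul hD (insl i l) a
    rw [intervalIntegral.integral_add (hint1.intervalIntegrable 0 t)
      (hint2.intervalIntegrable 0 t)]
    rw [integral_list_sum hD a t (insl i l)]
    simp only [insl, List.map_cons, List.sum_cons, List.map_map, Function.comp]
    rfl

/-! ### Formal linear combinations of words -/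

/-- A formal linear combination of words: list of (word, coefficient) pairs. -/
abbrev Tm (n : ℕ) := List (List (Fin n) × ℝ)

/-- Evaluation of a formal combination against iterated integrals built from `D`. -/
def evD (D : Fin n → ℝ → ℝ) (T : Tm n) (t : ℝ) : ℝ :=
  (T.map (fun p => p.2 * cSD D p.1 t)).sum

def smulT (r : ℝ) (T : Tm n) : Tm n := T.map (fun p => (p.1, r * p.2))

def mulLetterT (i : Fin n) (T : Tm n) : Tm n :=
  T.flatMap (fun p => (insl i p.1).map (fun w => (w, p.2)))

def mulCoordT (x : ℝ) (i : Fin n) (T : Tm n) : Tm n := smulT x T ++ mulLetterT i T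

def powCoordT (x : ℝ) (i : Fin n) : ℕ → Tm n → Tm n
  | 0, T => T
  | k + 1, T => mulCoordT x i (powCoordT x i k T)

def mulMonoT (x₀ : Fin n → ℝ) (m : Fin n → ℕ) (T : Tm n) : Tm n :=
  (List.finRange n).foldr (fun i T' => powCoordT (x₀ i) i (m i) T') T

def intT (j : Fin n) (T : Tm n) : Tm n := T.map (fun p => (j :: p.1, p.2))

def PsiT (x₀ : Fin n → ℝ) : List ((Fin n → ℕ) × Fin n) → Tm n
  | [] => [([], 1)]
  | mj :: rest => intT mj.2 (mulMonoT x₀ mj.1 (PsiT x₀ rest))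

theorem evD_continuous {D : Fin n → ℝ → ℝ} (hD : ∀ i, Good (D i)) (T : Tm n) :
    Continuous (evD D T) := by
  induction T with
  | nil => exact continuous_const
  | cons p T ih =>
    have : evD D (p :: T) = fun t => p.2 * cSD D p.1 t + evD D T t := by
      funext t; simp [evD]
    rw [this]
    exact (continuous_const.mul (cSD_continuous hD p.1)).add ih

theorem evD_append (D : Fin n → ℝ → ℝ) (T₁ T₂ : Tm n) (t : ℝ) :
    evD D (T₁ ++ T₂) t = evD D T₁ t + evD D T₂ t := by
  simp [evD]

theorem evD_smul (D : Fin n → ℝ → ℝ) (r : ℝ) (T : Tm n) (t : ℝ) :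
    evD D (smulT r T) t = r * evD D T t := by
  induction T with
  | nil => simp [evD, smulT]
  | cons p T ih => simp only [evD, smulT, List.map_cons, List.sum_cons] at *; rw [ih]; ring

theorem evD_mulLetter {D : Fin n → ℝ → ℝ} (hD : ∀ i, Good (D i)) (i : Fin n) (T : Tm n)
    {t : ℝ} (ht : t ∈ Icc (0:ℝ) 1) :
    evD D (mulLetterT i T) t = cSD D [i] t * evD D T t := by
  induction T with
  | nil => simp [evD, mulLetterT]
  | cons p T ih =>
    have hbind : mulLetterT i (p :: T) =
        (insl i p.1).map (fun w => (w, p.2)) ++ mulLetterT i T := by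
      simp [mulLetterT]
    rw [hbind]
    have h1 : evD D ((insl i p.1).map (fun w => (w, p.2))) t =
        p.2 * ((insl i p.1).map (fun w => cSD D w t)).sum := by
      show ((((insl i p.1).map (fun w => (w, p.2))).map (fun q => q.2 * cSD D q.1 t)).sum) = _
      rw [List.map_map]
      exact List.sum_map_mul_left _ _ _
    rw [evD_append, h1, ← shuffle_one hD i p.1 t ht, ih]
    simp [evD]
    ring

theorem evD_mulCoord {D : Fin n → ℝ → ℝ} (hD : ∀ i, Good (D i)) (c : ℝ) (i : Fin n)
    (T : Tm n) {t : ℝ} (ht : t ∈ Icc (0:ℝ) 1) :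
    evD D (mulCoordT c i T) t = (c + cSD D [i] t) * evD D T t := by
  rw [mulCoordT, evD_append, evD_smul, evD_mulLetter hD i T ht]
  ring

theorem evD_powCoord {D : Fin n → ℝ → ℝ} (hD : ∀ i, Good (D i)) (c : ℝ) (i : Fin n)
    (k : ℕ) (T : Tm n) {t : ℝ} (ht : t ∈ Icc (0:ℝ) 1) :
    evD D (powCoordT c i k T) t = (c + cSD D [i] t) ^ k * evD D T t := by
  induction k with
  | zero => simp [powCoordT]
  | succ k ih =>
    rw [powCoordT, evD_mulCoord hD c i _ ht, ih]
    ring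

theorem evD_mulMono {D : Fin n → ℝ → ℝ} (hD : ∀ i, Good (D i)) (x₀ : Fin n → ℝ)
    (m : Fin n → ℕ) (T : Tm n) {t : ℝ} (ht : t ∈ Icc (0:ℝ) 1) :
    evD D (mulMonoT x₀ m T) t =
      (∏ i : Fin n, (x₀ i + cSD D [i] t) ^ m i) * evD D T t := by
  rw [mulMonoT, Fin.prod_univ_def]
  induction (List.finRange n) with
  | nil => simp
  | cons a L ih =>
    simp only [List.foldr_cons, List.map_cons, List.prod_cons]
    rw [evD_powCoord hD (x₀ a) a (m a) _ ht, ih]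
    ring

theorem evD_int {D : Fin n → ℝ → ℝ} (hD : ∀ i, Good (D i)) (j : Fin n) (T : Tm n)
    (t : ℝ) :
    evD D (intT j T) t = ∫ u in (0:ℝ)..t, evD D T u * D j u := by
  induction T with
  | nil => simp [evD, intT]
  | cons p T ih =>
    have hg1 : Good (fun u => cSD D p.1 u * D j u) := cSD_good hD p.1 j
    have hg1' : Good (fun u => p.2 * (cSD D p.1 u * D j u)) := by
      have := Good.mul_pc (continuous_pc (continuous_const (y := p.2))) hg1
      convert this using 2 with u
    have hg2 : Good (fun u => evD D T u * D j u) :=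
      Good.mul_pc (continuous_pc (evD_continuous hD T)) (hD j)
    have hsplit : (fun u => evD D (p :: T) u * D j u) =
        fun u => p.2 * (cSD D p.1 u * D j u) + evD D T u * D j u := by
      funext u; simp [evD]; ring
    calc evD D (intT j (p :: T)) t
        = p.2 * cSD D (j :: p.1) t + evD D (intT j T) t := by simp [evD, intT]
      _ = p.2 * (∫ u in (0:ℝ)..t, cSD D p.1 u * D j u) +
            ∫ u in (0:ℝ)..t, evD D T u * D j u := by rw [cSD_cons, ih]
      _ = ∫ u in (0:ℝ)..t, (p.2 * (cSD D p.1 u * D j u) + evD D T u * D j u) := by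
            rw [intervalIntegral.integral_add (hg1'.intervalIntegrable 0 t)
              (hg2.intervalIntegrable 0 t), intervalIntegral.integral_const_mul]
      _ = ∫ u in (0:ℝ)..t, evD D (p :: T) u * D j u := by rw [← hsplit]


section PartitionFacts
variable {k : ℕ} {s : Fin (k + 1) → ℝ}

theorem IsPartition.mem_Icc (hs : IsPartition s) (j : Fin (k + 1)) : s j ∈ Icc (0:ℝ) 1 := by
  obtain ⟨h0, h1, hm⟩ := hs
  exact ⟨h0 ▸ hm.monotone (Fin.zero_le j), h1 ▸ hm.monotone (Fin.le_last j)⟩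

theorem IsPartition.k_pos (hs : IsPartition s) : 0 < k := by
  rcases Nat.eq_zero_or_pos k with hk | hk
  · exfalso
    subst hk
    obtain ⟨h0, h1, -⟩ := hs
    rw [show Fin.last 0 = 0 from rfl] at h1
    rw [h0] at h1; norm_num at h1
  · exact hk

theorem IsPartition.cover (hs : IsPartition s) {t : ℝ} (ht : t ∈ Icc (0:ℝ) 1) :
    ∃ j : Fin k, t ∈ Icc (s j.castSucc) (s j.succ) := by
  obtain ⟨h0, h1, hm⟩ := hs
  have hA : (Finset.univ.filter (fun j : Fin (k+1) => s j ≤ t)).Nonempty := by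
    refine ⟨0, ?_⟩
    simp [h0, ht.1]
  obtain ⟨j₀, hj₀mem, hj₀max⟩ := Finset.exists_max_image _ id hA
  simp only [Finset.mem_filter, Finset.mem_univ, true_and] at hj₀mem
  by_cases hcase : (j₀ : ℕ) < k
  · refine ⟨⟨j₀, hcase⟩, ?_, ?_⟩
    · exact le_of_eq_of_le (congrArg s (Fin.ext rfl)) hj₀mem
    · by_contra hlt
      push_neg at hlt
      have hmem : (Fin.succ ⟨(j₀ : ℕ), hcase⟩ : Fin (k+1)) ∈
          Finset.univ.filter (fun j : Fin (k+1) => s j ≤ t) := by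
        simp only [Finset.mem_filter, Finset.mem_univ, true_and]
        exact hlt.le
      have := hj₀max _ hmem
      simp only [id] at this
      have : ((Fin.succ ⟨(j₀ : ℕ), hcase⟩ : Fin (k+1)) : ℕ) ≤ (j₀ : ℕ) := this
      simp at this
  · have hj₀ : j₀ = Fin.last k := by
      apply Fin.ext
      have := j₀.isLt
      simp only [Fin.val_last]
      omega
    have ht1 : t = 1 := le_antisymm ht.2 (by rw [hj₀, h1] at hj₀mem; exact hj₀mem)
    have hk : 0 < k := IsPartition.k_pos ⟨h0, h1, hm⟩
    refine ⟨⟨k - 1, by omega⟩, ?_, ?_⟩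
    · rw [ht1]
      exact (IsPartition.mem_Icc ⟨h0, h1, hm⟩ _).2
    · have : (Fin.succ ⟨k - 1, by omega⟩ : Fin (k+1)) = Fin.last k := by
        apply Fin.ext; simp; omega
      rw [this, h1, ht1]

theorem IsPartition.interior_cover (hs : IsPartition s) {t : ℝ} (ht : t ∈ Ioo (0:ℝ) 1)
    (hts : t ∉ range s) :
    ∃ j : Fin k, t ∈ Ioo (s j.castSucc) (s j.succ) := by
  obtain ⟨j, hj⟩ := hs.cover ⟨ht.1.le, ht.2.le⟩
  refine ⟨j, lt_of_le_of_ne hj.1 ?_, lt_of_le_of_ne hj.2 ?_⟩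
  · exact fun h => hts ⟨j.castSucc, h⟩
  · exact fun h => hts ⟨j.succ, h.symm⟩

theorem IsPartition.pairwise_disjoint (hs : IsPartition s) {j j' : Fin k} {t : ℝ}
    (h : t ∈ Ico (s j.castSucc) (s j.succ)) (h' : t ∈ Ico (s j'.castSucc) (s j'.succ)) :
    j = j' := by
  obtain ⟨-, -, hm⟩ := hs
  by_contra hne
  rcases lt_or_gt_of_ne hne with hlt | hlt
  · have h2 : s j.succ ≤ s j'.castSucc := hm.monotone (by
      simp only [Fin.le_def, Fin.val_succ, Fin.coe_castSucc]
      exact hlt)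
    have := h.2; have := h'.1; linarith
  · have h2 : s j'.succ ≤ s j.castSucc := hm.monotone (by
      simp only [Fin.le_def, Fin.val_succ, Fin.coe_castSucc]
      exact hlt)
    have := h'.2; have := h.1; linarith

end PartitionFacts


section Gluing

theorem continuousOn_union_closed {X : Type*} [TopologicalSpace X] {f : ℝ → X} {A B : Set ℝ}
    (hA : IsClosed A) (hB : IsClosed B) (ha : ContinuousOn f A) (hb : ContinuousOn f B) :
    ContinuousOn f (A ∪ B) := by
  intro x hx
  have key : ∀ (S T : Set ℝ), IsClosed T → ContinuousOn f S → ContinuousOn f T → x ∈ S →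
      ContinuousWithinAt f (S ∪ T) x := by
    intro S T hTc hS hT hxS
    by_cases hxT : x ∈ T
    · exact (hS x hxS).union (hT x hxT)
    · exact (hS x hxS).union
        (continuousWithinAt_of_notMem_closure (by rwa [hTc.closure_eq]))
  rcases hx with hxA | hxB
  · exact key A B hB ha hb hxA
  · rw [union_comm]
    exact key B A hA hb ha hxB

theorem IsPartition.continuousOn_of_pieces {X : Type*} [TopologicalSpace X]
    {k : ℕ} {s : Fin (k + 1) → ℝ} (hs : IsPartition s) {f : ℝ → X}
    (hf : ∀ j : Fin k, ContinuousOn f (Icc (s j.castSucc) (s j.succ))) :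
    ContinuousOn f (Icc 0 1) := by
  obtain ⟨h0, h1, hm⟩ := hs
  have main : ∀ m : ℕ, ∀ hm' : m ≤ k, ContinuousOn f (Icc (s 0) (s ⟨m, by omega⟩)) := by
    intro m
    induction m with
    | zero =>
      intro _
      have : s (⟨0, by omega⟩ : Fin (k+1)) = s 0 := rfl
      rw [this, Icc_self]
      intro x hx
      rw [mem_singleton_iff] at hx
      subst hx
      exact continuousWithinAt_singleton
    | succ m ih =>
      intro hm'
      have hmk : m ≤ k := by omega
      have hsplit : Icc (s 0) (s ⟨m+1, by omega⟩) =
          Icc (s 0) (s ⟨m, by omega⟩) ∪ Icc (s ⟨m, by omega⟩) (s ⟨m+1, by omega⟩) := by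
        rw [Icc_union_Icc_eq_Icc]
        · exact hm.monotone (by simp [Fin.le_def])
        · exact hm.monotone (by simp [Fin.le_def])
      rw [hsplit]
      refine continuousOn_union_closed isClosed_Icc isClosed_Icc (ih hmk) ?_
      have hpiece := hf ⟨m, by omega⟩
      have e1 : (Fin.castSucc ⟨m, by omega⟩ : Fin (k+1)) = ⟨m, by omega⟩ := rfl
      have e2 : (Fin.succ ⟨m, by omega⟩ : Fin (k+1)) = ⟨m+1, by omega⟩ := rfl
      rwa [e1, e2] at hpiece
  have := main k le_rfl
  have e3 : (⟨k, by omega⟩ : Fin (k+1)) = Fin.last k := rfl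
  rwa [h0, e3, h1] at this

end Gluing


section DConstruction

theorem exists_good_D {n : ℕ} {γ : ℝ → (Fin n → ℝ)} (hγ : PiecewiseSmooth γ) :
    ∃ D : Fin n → ℝ → ℝ,
      (∀ i, Good (D i)) ∧
      (∀ i, ContinuousOn (fun t => γ t i) (Icc 0 1)) ∧
      ∃ E : Set ℝ, E.Countable ∧ ∀ (i : Fin n), ∀ t ∈ Ioo (0:ℝ) 1 \ E,
        HasDerivAt (fun u => γ u i) (D i t) t := by
  obtain ⟨k, s, hs, hsm⟩ := hγ
  have hlt : ∀ j : Fin k, s j.castSucc < s j.succ := fun j => hs.2.2 (Fin.castSucc_lt_succ (i := j))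
  have hci : ∀ (i : Fin n) (j : Fin k),
      ContDiffOn ℝ (⊤ : ℕ∞) (fun u => γ u i) (Icc (s j.castSucc) (s j.succ)) := fun i j =>
    (ContinuousLinearMap.proj (R := ℝ) (φ := fun _ : Fin n => ℝ) i).contDiff.comp_contDiffOn
      (hsm j)
  set dW : Fin n → Fin k → ℝ → ℝ :=
    fun i j => derivWithin (fun u => γ u i) (Icc (s j.castSucc) (s j.succ)) with hdW
  have hdWc : ∀ i j, ContinuousOn (dW i j) (Icc (s j.castSucc) (s j.succ)) := fun i j =>
    (hci i j).continuousOn_derivWithin (uniqueDiffOn_Icc (hlt j)) (by simp)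
  set D : Fin n → ℝ → ℝ := fun i t =>
    ∑ j : Fin k, (Ico (s j.castSucc) (s j.succ)).indicator (dW i j) t with hD
  have hIccsub : ∀ j : Fin k, Icc (s j.castSucc) (s j.succ) ⊆ Icc (0:ℝ) 1 := fun j =>
    Icc_subset_Icc (hs.mem_Icc _).1 (hs.mem_Icc _).2
  have hDval : ∀ (i : Fin n) (j₀ : Fin k) (u : ℝ), u ∈ Ioo (s j₀.castSucc) (s j₀.succ) →
      D i u = dW i j₀ u := by
    intro i j₀ u hu
    show ∑ j : Fin k, (Ico (s j.castSucc) (s j.succ)).indicator (dW i j) u = dW i j₀ u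
    have hu' : u ∈ Ico (s j₀.castSucc) (s j₀.succ) := ⟨hu.1.le, hu.2⟩
    rw [Finset.sum_eq_single j₀]
    · exact indicator_of_mem hu' _
    · intro j _ hj
      refine indicator_of_notMem (fun hmem => hj ?_) _
      exact hs.pairwise_disjoint hmem hu'
    · intro h; exact absurd (Finset.mem_univ j₀) h
  have hEcount : (range s).Countable := (Set.finite_range s).countable
  have hDcont : ∀ (i : Fin n), ∀ t ∈ Ioo (0:ℝ) 1 \ range s, ContinuousAt (D i) t := by
    intro i t ht
    obtain ⟨j₀, hj₀⟩ := hs.interior_cover ht.1 ht.2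
    have hnhds : Icc (s j₀.castSucc) (s j₀.succ) ∈ 𝓝 t := Icc_mem_nhds hj₀.1 hj₀.2
    have hgc : ContinuousAt (dW i j₀) t :=
      ((hdWc i j₀) t ⟨hj₀.1.le, hj₀.2.le⟩).continuousAt hnhds
    refine hgc.congr ?_
    filter_upwards [Ioo_mem_nhds hj₀.1 hj₀.2] with u hu
    exact (hDval i j₀ u hu).symm
  have hDderiv : ∀ (i : Fin n), ∀ t ∈ Ioo (0:ℝ) 1 \ range s,
      HasDerivAt (fun u => γ u i) (D i t) t := by
    intro i t ht
    obtain ⟨j₀, hj₀⟩ := hs.interior_cover ht.1 ht.2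
    have hnhds : Icc (s j₀.castSucc) (s j₀.succ) ∈ 𝓝 t := Icc_mem_nhds hj₀.1 hj₀.2
    have hdiff : DifferentiableWithinAt ℝ (fun u => γ u i)
        (Icc (s j₀.castSucc) (s j₀.succ)) t :=
      ((hci i j₀).differentiableOn (by simp)) t ⟨hj₀.1.le, hj₀.2.le⟩
    have := (hdiff.hasDerivWithinAt).hasDerivAt hnhds
    rwa [hDval i j₀ t hj₀]
  refine ⟨D, ?_, ?_, range s, hEcount, hDderiv⟩
  · intro i
    refine ⟨?_, ?_, ?_, range s, hEcount, hDcont i⟩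
    · apply Finset.aestronglyMeasurable_fun_sum
      intro j _
      exact (aestronglyMeasurable_indicator_iff measurableSet_Ico).mpr
        (((hdWc i j).mono Ico_subset_Icc_self).aestronglyMeasurable measurableSet_Ico)
    · have hCj : ∀ j : Fin k, ∃ C, ∀ u ∈ Icc (s j.castSucc) (s j.succ), ‖dW i j u‖ ≤ C :=
        fun j => isCompact_Icc.exists_bound_of_continuousOn (hdWc i j)
      choose C hC using hCj
      refine ⟨∑ j : Fin k, max (C j) 0, fun t => ?_⟩
      calc |D i t| ≤ ∑ j : Fin k, |(Ico (s j.castSucc) (s j.succ)).indicator (dW i j) t| :=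
            Finset.abs_sum_le_sum_abs _ _
        _ ≤ ∑ j : Fin k, max (C j) 0 := by
            refine Finset.sum_le_sum fun j _ => ?_
            by_cases hmem : t ∈ Ico (s j.castSucc) (s j.succ)
            · rw [indicator_of_mem hmem]
              exact le_max_of_le_left (by simpa using hC j t (Ico_subset_Icc_self hmem))
            · rw [indicator_of_notMem hmem, abs_zero]
              exact le_max_right _ _
    · intro t ht
      show ∑ j : Fin k, (Ico (s j.castSucc) (s j.succ)).indicator (dW i j) t = 0
      refine Finset.sum_eq_zero fun j _ => ?_
      refine indicator_of_notMem (fun hmem => ht ?_) _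
      exact hIccsub j (Ico_subset_Icc_self hmem)
  · intro i
    exact hs.continuousOn_of_pieces fun j => (hci i j).continuousOn

end DConstruction


section Bridge

theorem ae_aux {E : Set ℝ} (hE : E.Countable) {t : ℝ} (ht : t ∈ Icc (0:ℝ) 1) {f g : ℝ → ℝ}
    (h : ∀ u, u ∈ Ioo (0:ℝ) 1 \ E → u ∈ Icc (0:ℝ) 1 → f u = g u) :
    ∀ᵐ u ∂(volume : Measure ℝ), u ∈ Set.uIoc (0:ℝ) t → f u = g u := by
  have hnull : (volume : Measure ℝ) (E ∪ {1}) = 0 :=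
    measure_mono_null (by rfl) ((hE.union (countable_singleton 1)).measure_zero _)
  have hae : ∀ᵐ u ∂(volume : Measure ℝ), u ∉ E ∪ {1} :=
    measure_eq_zero_iff_ae_notMem.mp hnull
  filter_upwards [hae] with u hu hmem
  rw [uIoc_of_le ht.1] at hmem
  have hu1 : u ≠ 1 := fun h' => hu (Or.inr h')
  have huE : u ∉ E := fun h' => hu (Or.inl h')
  have hu01 : u ∈ Icc (0:ℝ) 1 := ⟨hmem.1.le, hmem.2.trans ht.2⟩
  exact h u ⟨⟨hmem.1, lt_of_le_of_ne hu01.2 hu1⟩, huE⟩ hu01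

variable {n : ℕ} {γ : ℝ → (Fin n → ℝ)} {D : Fin n → ℝ → ℝ} {E : Set ℝ}

theorem chenS_eq_cSD (hD : ∀ i, Good (D i)) (hE : E.Countable)
    (hderiv : ∀ (i : Fin n), ∀ t ∈ Ioo (0:ℝ) 1 \ E, HasDerivAt (fun u => γ u i) (D i t) t) :
    ∀ l : List (Fin n), ∀ t ∈ Icc (0:ℝ) 1, chenS γ l t = cSD D l t := by
  intro l
  induction l with
  | nil => intro t _; rfl
  | cons i l ih =>
    intro t ht
    show (∫ u in (0:ℝ)..t, chenS γ l u * pathDeriv γ i u) = ∫ u in (0:ℝ)..t, cSD D l u * D i u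
    apply intervalIntegral.integral_congr_ae
    apply ae_aux hE ht
    intro u hu1 hu2
    have hpd : pathDeriv γ i u = D i u := (hderiv i u hu1).deriv
    rw [ih u hu2, hpd]

theorem coord_eq (hD : ∀ i, Good (D i)) (hE : E.Countable)
    (hγc : ∀ i, ContinuousOn (fun t => γ t i) (Icc 0 1))
    (hderiv : ∀ (i : Fin n), ∀ t ∈ Ioo (0:ℝ) 1 \ E, HasDerivAt (fun u => γ u i) (D i t) t)
    (i : Fin n) : ∀ t ∈ Icc (0:ℝ) 1, γ t i = γ 0 i + cSD D [i] t := by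
  intro t ht
  have hgood : Good (fun u => cSD D [] u * D i u) := cSD_good hD [] i
  have key := recovery hgood (F := fun t => γ t i - γ 0 i)
    (((hγc i).sub continuousOn_const)) (by simp) hE (fun u hu => by
      have h1 : HasDerivAt (fun v => γ v i - γ 0 i) (D i u) u :=
        (hderiv i u hu).sub_const _
      have : cSD D [] u * D i u = D i u := one_mul _
      rw [this]
      exact h1) t ht
  have : (∫ u in (0:ℝ)..t, cSD D [] u * D i u) = cSD D [i] t := rfl
  rw [this] at key
  have key' : γ t i - γ 0 i = cSD D [i] t := key
  linarith

theorem witAux_eq_evD (hD : ∀ i, Good (D i)) (hE : E.Countable)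
    (hγc : ∀ i, ContinuousOn (fun t => γ t i) (Icc 0 1))
    (hderiv : ∀ (i : Fin n), ∀ t ∈ Ioo (0:ℝ) 1 \ E, HasDerivAt (fun u => γ u i) (D i t) t) :
    ∀ L : List ((Fin n → ℕ) × Fin n), ∀ t ∈ Icc (0:ℝ) 1,
      witAux γ (L.map (fun p => (monomialFn p.1, p.2))) t = evD D (PsiT (γ 0) L) t := by
  intro L
  induction L with
  | nil =>
    intro t _
    show (1:ℝ) = evD D [([], 1)] t
    simp [evD]
    rfl
  | cons mj rest ih =>
    intro t ht
    obtain ⟨m, j⟩ := mj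
    show (∫ u in (0:ℝ)..t, witAux γ (rest.map (fun p => (monomialFn p.1, p.2))) u *
        (monomialFn m (γ u) * pathDeriv γ j u)) = evD D (PsiT (γ 0) ((m, j) :: rest)) t
    have hPsi : PsiT (γ 0) ((m, j) :: rest) = intT j (mulMonoT (γ 0) m (PsiT (γ 0) rest)) := rfl
    rw [hPsi, evD_int hD]
    apply intervalIntegral.integral_congr_ae
    apply ae_aux hE ht
    intro u hu1 hu2
    have hpd : pathDeriv γ j u = D j u := (hderiv j u hu1).deriv
    rw [ih u hu2, hpd, evD_mulMono hD _ _ _ hu2]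
    have hmono : monomialFn m (γ u) = ∏ i : Fin n, (γ 0 i + cSD D [i] u) ^ m i := by
      rw [monomialFn]
      exact Finset.prod_congr rfl fun i _ => by
        rw [← coord_eq hD hE hγc hderiv i u hu2]
    rw [← hmono]
    ring

end Bridge


theorem list_sum_split {α : Type*} (P : α → Bool) (f : α → ℝ) :
    ∀ T : List α, (T.map f).sum =
      ((T.filter P).map f).sum + ((T.filter (fun a => !P a)).map f).sum := by
  intro T
  induction T with
  | nil => simp
  | cons p T ih =>
    by_cases h : P p <;> simp [List.filter_cons, h, ih] <;> ring


/-- Fix monomials `g₁,…,g_q`, indices `j₁,…,j_q` and a basepoint `x₀`.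
Then there are finitely many nonempty index sequences with real coefficients, and a
constant `c₀`, such that for every piecewise smooth path `γ` starting at `x₀`, the
weighted iterated integral `∫_γ g₁dx_{j₁}⋯g_qdx_{j_q}` equals `c₀` plus the
corresponding linear combination of elementary iterated integrals of `γ`. -/
theorem weighted_iterInt_eq_linear_combination {n : ℕ} (q : ℕ) (hq : 1 ≤ q)
    (Mexp : Fin q → Fin n → ℕ) (j : Fin q → Fin n) (x₀ : Fin n → ℝ) :
    ∃ (c₀ : ℝ) (N : ℕ) (ls : Fin N → List (Fin n)) (c : Fin N → ℝ),
      (∀ m : Fin N, ls m ≠ []) ∧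
      ∀ γ : ℝ → (Fin n → ℝ), PiecewiseSmooth γ → γ 0 = x₀ →
        weightedIterInt γ (List.ofFn fun m : Fin q => (monomialFn (Mexp m), j m)) =
          c₀ + ∑ m : Fin N, c m * elemIterInt γ (ls m) := by
  classical
  set L : List ((Fin n → ℕ) × Fin n) := (List.ofFn fun m : Fin q => (Mexp m, j m)).reverse
    with hL
  set T : Tm n := PsiT x₀ L with hT
  set Te : Tm n := T.filter (fun p => p.1.isEmpty) with hTe
  set Tn : Tm n := T.filter (fun p => !p.1.isEmpty) with hTn
  refine ⟨(Te.map (fun p => p.2)).sum, Tn.length,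
    fun m => (Tn.get m).1.reverse, fun m => (Tn.get m).2, ?_, ?_⟩
  · intro m
    have hmem : Tn.get m ∈ Tn := List.mem_iff_get.mpr ⟨m, rfl⟩
    have hP := List.of_mem_filter (p := fun p : List (Fin n) × ℝ => !p.1.isEmpty)
      (show Tn.get m ∈ T.filter _ from hmem)
    have : ¬ (Tn.get m).1.isEmpty := by simpa using hP
    intro hrev
    rw [List.reverse_eq_nil_iff] at hrev
    rw [hrev] at this
    exact this rfl
  · intro γ hγ hγ0
    obtain ⟨D, hD, hγc, E, hE, hderiv⟩ := exists_good_D hγ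
    have h1mem : (1:ℝ) ∈ Icc (0:ℝ) 1 := by norm_num
    have hlist : (List.ofFn fun m : Fin q => (monomialFn (Mexp m), j m)).reverse =
        L.map (fun p => (monomialFn p.1, p.2)) := by
      rw [hL, List.map_reverse, List.map_ofFn]
      rfl
    have hwit : weightedIterInt γ (List.ofFn fun m : Fin q => (monomialFn (Mexp m), j m)) =
        witAux γ (L.map (fun p => (monomialFn p.1, p.2))) 1 := by
      rw [weightedIterInt, hlist]
    rw [hwit, witAux_eq_evD hD hE hγc hderiv L 1 h1mem, hγ0, ← hT]
    have hev : evD D T 1 = (T.map (fun p => p.2 * chenS γ p.1 1)).sum := by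
      rw [evD]
      congr 1
      refine List.map_congr_left fun p _ => ?_
      rw [chenS_eq_cSD hD hE hderiv p.1 1 h1mem]
    rw [hev, list_sum_split (fun p => p.1.isEmpty) _ T, ← hTe, ← hTn]
    congr 1
    · have hmafp : List.map (fun p : List (Fin n) × ℝ => p.2 * chenS γ p.1 1) Te =
          List.map (fun p => p.2) Te := by
        refine List.map_congr_left fun p hp => ?_
        have hP := List.of_mem_filter (p := fun p : List (Fin n) × ℝ => p.1.isEmpty)
          (show p ∈ T.filter _ from hp)
        have hempty : p.1 = [] := by simpa [List.isEmpty_iff] using hP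
        rw [hempty]
        show p.2 * (1:ℝ) = p.2
        rw [mul_one]
      rw [hmafp]
    · have key := Fin.sum_univ_fun_getElem Tn (fun p => p.2 * chenS γ p.1 1)
      rw [← key]
      refine Finset.sum_congr rfl fun m _ => ?_
      have : elemIterInt γ (Tn.get m).1.reverse = chenS γ (Tn.get m).1 1 := by
        rw [elemIterInt, List.reverse_reverse]
      rw [this]
      rfl


end ChenPaper
end
end
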